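/- arXiv:2408.11923 — 11 statements merged into one kernel-verified Lean document; each statement's English description precedes it below -/
import Mathlib

section
/- If G is a finite group with subgroups A, B satisfying AB ∩ BA = A ∪ B, and a ∈ A \ B, then the conjugate subgroup a⁻¹Ba intersected with B is contained in A ∩ B. -/
open scoped Pointwise

theorem Subgroup.mem_of_mul_mem_mul_of_inter_subset_union {G : Type*} [Group G]
    {A B : Subgroup G} (h : (A : Set G) * B ∩ (B * A) ⊆ A ∪ B) {a x : G}
    (haA : a ∈ A) (haB : a ∉ B) (hx : x ∈ B) (hax : a * x ∈ (B : Set G) * A) : x ∈ A := by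
  rcases h ⟨Set.mul_mem_mul haA hx, hax⟩ with hA | hB
  · exact (A.mul_mem_cancel_left haA).mp hA
  · exact absurd ((B.mul_mem_cancel_right hx).mp hB) haB

/-- If `AB ∩ BA = A ∪ B` and `a ∈ A \ B`, then `a⁻¹Ba ∩ B ⊆ A ∩ B`. -/
theorem stmt1 {G : Type*} [Group G] (A B : Subgroup G)
    (h4 : ((A : Set G) * (B : Set G)) ∩ ((B : Set G) * (A : Set G)) =
      (A : Set G) ∪ (B : Set G))
    (a : G) (haA : a ∈ A) (haB : a ∉ B) :
    ((fun x => a⁻¹ * x * a) '' (B : Set G)) ∩ (B : Set G) ⊆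
      (A : Set G) ∩ (B : Set G) := by
  rintro _ ⟨⟨b, hb, rfl⟩, hconjB⟩
  have hmul : a * (a⁻¹ * b * a) = b * a := by group
  exact ⟨Subgroup.mem_of_mul_mem_mul_of_inter_subset_union h4.subset haA haB hconjB
    (hmul ▸ Set.mul_mem_mul hb haA), hconjB⟩
end

section
/- Let G be a finite group with subgroups A, B, M satisfying: |A| = |B| = |M| = nk, |G| = n³k with k = |A∩B|, AM and BM are subgroups of order n²k, and G = AMB. If a ∈ A, b ∈ B and the commutator [a,b] = a⁻¹b⁻¹ab lies in AM \ A, then ab ≠ b'a' for all b' ∈ B and a' ∈ A. -/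
/-!
Since `G = AMB`, also `G = B·AM`, so `B` acts transitively on `G ⧸ AM` and
`|AM ∩ B| = |B| / [G : AM] = nk / n = k = |A ∩ B|`; hence `AM ∩ B ⊆ A`.
If `ab = b'a'`, then `b⁻¹b' = a [a, b] a'⁻¹` lies in `AM ∩ B ⊆ A`, which forces `[a, b] ∈ A`.
-/

open scoped Pointwise

namespace Subgroup

variable {G : Type*} [Group G] {H K : Subgroup G}

theorem relIndex_eq_index_of_mul_eq_univ (h : (K : Set G) * (H : Set G) = Set.univ) :
    H.relIndex K = H.index := by
  have hstab : MulAction.stabilizer K ((1 : G) : G ⧸ H) = H.subgroupOf K := by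
    ext k
    change ((k : G) • (1 : G) : G ⧸ H) = _ ↔ _
    simp [mem_subgroupOf, QuotientGroup.eq]
  have horbit : MulAction.orbit K ((1 : G) : G ⧸ H) = Set.univ := by
    refine Set.eq_univ_of_forall fun q => QuotientGroup.induction_on q fun g => ?_
    obtain ⟨k, hk, x, hx, rfl⟩ := h.symm ▸ Set.mem_univ g
    refine ⟨⟨k, hk⟩, (QuotientGroup.eq (s := H)).mpr ?_⟩
    simpa using hx
  rw [relIndex, ← hstab, MulAction.index_stabilizer, horbit, Set.ncard_univ, index]

theorem card_eq_index_mul_card_inf_of_mul_eq_univ (h : (K : Set G) * (H : Set G) = Set.univ) :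
    Nat.card K = H.index * Nat.card (H ⊓ K : Subgroup G) := by
  rw [← relIndex_eq_index_of_mul_eq_univ h, ← inf_relIndex_right, relIndex,
    ← Nat.card_congr (subgroupOfEquivOfLe inf_le_right).toEquiv, index_mul_card]

end Subgroup

theorem commutator_mem_of_mul_eq_mul {G : Type*} [Group G] {A B H : Subgroup G}
    (hAH : A ≤ H) (hHB : H ⊓ B ≤ A) {a b a' b' : G} (ha : a ∈ A) (hb : b ∈ B)
    (ha' : a' ∈ A) (hb' : b' ∈ B) (hc : a⁻¹ * b⁻¹ * a * b ∈ H) (heq : a * b = b' * a') :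
    a⁻¹ * b⁻¹ * a * b ∈ A := by
  have hbb' : b⁻¹ * b' = a * (a⁻¹ * b⁻¹ * a * b) * a'⁻¹ := by
    rw [eq_mul_inv_iff_mul_eq, mul_assoc _ a b, heq]; group
  have hbb'A : b⁻¹ * b' ∈ A := hHB ⟨hbb' ▸ H.mul_mem (H.mul_mem (hAH ha) hc) (H.inv_mem (hAH ha')),
    B.mul_mem (B.inv_mem hb) hb'⟩
  have hc' : a⁻¹ * b⁻¹ * a * b = a⁻¹ * (b⁻¹ * b') * a' := by rw [hbb']; group
  rw [hc']
  exact A.mul_mem (A.mul_mem (A.inv_mem ha) hbb'A) ha'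

theorem stmt2_general {G : Type*} [Group G] [Finite G]
    (A B M AM : Subgroup G) (n k : ℕ)
    (hk : k = Nat.card (A ⊓ B : Subgroup G))
    (hB : Nat.card B = n * k)
    (hG : Nat.card G = n ^ 3 * k)
    (hAM : (AM : Set G) = (A : Set G) * (M : Set G))
    (hAMcard : Nat.card AM = n ^ 2 * k)
    (h3 : ∀ g : G, ∃ a ∈ A, ∃ m ∈ M, ∃ b ∈ B, g = a * m * b)
    (a : G) (haA : a ∈ A) (b : G) (hbB : b ∈ B)
    (hcomm : a⁻¹ * b⁻¹ * a * b ∈ AM ∧ a⁻¹ * b⁻¹ * a * b ∉ A) :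
    ∀ b' ∈ B, ∀ a' ∈ A, a * b ≠ b' * a' := by
  have hmem : ∀ {x y}, x ∈ A → y ∈ M → x * y ∈ AM := fun hx hy =>
    (hAM ▸ Set.mul_mem_mul hx hy : _ ∈ (AM : Set G))
  have hA_le : A ≤ AM := fun x hx => mul_one x ▸ hmem hx M.one_mem
  have hBAM : (B : Set G) * (AM : Set G) = Set.univ := by
    refine Set.eq_univ_of_forall fun g => ?_
    obtain ⟨x, hx, m, hm, y, hy, hg⟩ := h3 g⁻¹
    refine ⟨y⁻¹, B.inv_mem hy, (x * m)⁻¹, AM.inv_mem (hmem hx hm), ?_⟩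
    change y⁻¹ * (x * m)⁻¹ = g
    rw [← mul_inv_rev, ← hg, inv_inv]
  have hindex : AM.index = n := by
    refine Nat.eq_of_mul_eq_mul_left (hAMcard ▸ Nat.card_pos : 0 < n ^ 2 * k) ?_
    rw [← hAMcard, AM.card_mul_index, hG, hAMcard]
    ring
  have hinf_card : Nat.card (AM ⊓ B : Subgroup G) = k := by
    have := Subgroup.card_eq_index_mul_card_inf_of_mul_eq_univ hBAM
    rw [hB, hindex] at this
    have hn : 0 < n := Nat.pos_of_ne_zero (hindex ▸ AM.index_ne_zero_of_finite)
    exact (Nat.eq_of_mul_eq_mul_left hn this).symm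
  have hinf : AM ⊓ B ≤ A := by
    rw [← Subgroup.eq_of_le_of_card_ge (inf_le_inf_right B hA_le) (by rw [hinf_card, hk])]
    exact inf_le_left
  intro b' hb' a' ha' heq
  exact hcomm.2 (commutator_mem_of_mul_eq_mul hA_le hinf haA hbB ha' hb' hcomm.1 heq)

/-- Under conditions (1)–(3), if `a ∈ A`, `b ∈ B` and the commutator `a⁻¹b⁻¹ab`
lies in `AM \ A`, then `ab ≠ b'a'` for all `b' ∈ B`, `a' ∈ A`. -/
theorem stmt2 {G : Type*} [Group G] [Finite G]
    (A B M AM BM : Subgroup G) (n k : ℕ) (hn : 1 < n)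
    (hk : k = Nat.card (A ⊓ B : Subgroup G))
    (hA : Nat.card A = n * k) (hB : Nat.card B = n * k) (hM : Nat.card M = n * k)
    (hG : Nat.card G = n ^ 3 * k)
    (hAM : (AM : Set G) = (A : Set G) * (M : Set G))
    (hBM : (BM : Set G) = (B : Set G) * (M : Set G))
    (hAMcard : Nat.card AM = n ^ 2 * k) (hBMcard : Nat.card BM = n ^ 2 * k)
    (h3 : ∀ g : G, ∃ a ∈ A, ∃ m ∈ M, ∃ b ∈ B, g = a * m * b)
    (a : G) (haA : a ∈ A) (b : G) (hbB : b ∈ B)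
    (hcomm : a⁻¹ * b⁻¹ * a * b ∈ AM ∧ a⁻¹ * b⁻¹ * a * b ∉ A) :
    ∀ b' ∈ B, ∀ a' ∈ A, a * b ≠ b' * a' :=
  stmt2_general A B M AM n k hk hB hG hAM hAMcard h3 a haA b hbB hcomm
end

section
/- Let G be a finite group with subgroups A, B, M satisfying conditions (1)–(4): |A| = |B| = |M| = nk, |G| = n³k with k = |A∩B|, AM and BM are subgroups of order n²k, G = AMB, and AB ∩ BA = A ∪ B. Then G = ABAB, i.e., every element of G is a product of an element of A, an element of B, an element of A, and an element of B. -/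
/-!
Suppose `g ∉ ABAB`. Then `AB` and `g • BAB` are disjoint, so `|AB| + |BAB| ≤ |G| = n³k`.
The product formula gives `|AB| ≥ |A||B|/|A ∩ B| = n²k`. Condition (4) makes left multiplication
by `B` almost free on `W = AB \ B`: if `b w = b' w'` with `w, w' ∈ W`, then `b⁻¹ b' ∈ A ∩ B`.
Hence `|BW| ≥ n |W| ≥ n (n²k - nk)`, and `BAB` contains the disjoint sets `B` and `BW`, so
`|AB| + |BAB| ≥ n²k + nk + n³k - n²k > n³k`.
-/

open scoped Pointwise
open Set

namespace Set

variable {G : Type*} [Group G] [Finite G]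

/-- The map `(x, y) ↦ ((r (x * y))⁻¹ * x, x * y)`, with `r z` a chosen left factor of `z`,
embeds `X ×ˢ Y` into `I ×ˢ (X * Y)`. -/
theorem ncard_mul_ncard_le_of_inv_mul_mem {X Y I : Set G}
    (h : ∀ x₁ ∈ X, ∀ y₁ ∈ Y, ∀ x₂ ∈ X, ∀ y₂ ∈ Y, x₁ * y₁ = x₂ * y₂ → x₁⁻¹ * x₂ ∈ I) :
    X.ncard * Y.ncard ≤ I.ncard * (X * Y).ncard := by
  choose! r hrX s hsY hrs using fun z (hz : z ∈ X * Y) => hz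
  rw [← ncard_prod, ← ncard_prod]
  refine ncard_le_ncard_of_injOn (fun p => ((r (p.1 * p.2))⁻¹ * p.1, p.1 * p.2)) ?_ ?_
  · rintro ⟨x, y⟩ ⟨hx, hy⟩
    have hxy := mul_mem_mul hx hy
    exact ⟨h _ (hrX _ hxy) _ (hsY _ hxy) x hx y hy (hrs _ hxy), hxy⟩
  · rintro ⟨x, y⟩ - ⟨x', y'⟩ - hp
    simp only [Prod.mk.injEq] at hp
    obtain ⟨hx, hxy⟩ := hp
    rw [hxy, mul_right_inj] at hx
    subst hx
    rw [mul_right_inj] at hxy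
    rw [hxy]

end Set

namespace Subgroup

variable {G : Type*} [Group G] (A B : Subgroup G)

theorem card_mul_card_le_card_inf_mul_ncard_mul [Finite G] :
    Nat.card A * Nat.card B ≤ Nat.card (A ⊓ B : Subgroup G) * ((A : Set G) * B).ncard := by
  simp only [← SetLike.coe_sort_coe, Nat.card_coe_set_eq, coe_inf]
  refine ncard_mul_ncard_le_of_inv_mul_mem fun x₁ hx₁ y₁ hy₁ x₂ hx₂ y₂ hy₂ h => ?_
  have hxy : x₁⁻¹ * x₂ = y₁ * y₂⁻¹ := by
    rw [inv_mul_eq_iff_eq_mul, ← mul_assoc, h, mul_inv_cancel_right]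
  exact ⟨mul_mem (inv_mem hx₁) hx₂, hxy ▸ mul_mem hy₁ (inv_mem hy₂)⟩

theorem ncard_mul_add_ncard_mul_mul_le [Finite G] {g : G} (hg : g ∉ (A : Set G) * B * A * B) :
    ((A : Set G) * B).ncard + ((B : Set G) * A * B).ncard ≤ Nat.card G := by
  have hdisj : Disjoint ((A : Set G) * B) (g • ((B : Set G) * A * B)) := by
    refine disjoint_left.2 ?_
    rintro _ ⟨a, ha, b, hb, rfl⟩
      ⟨_, ⟨_, ⟨b₁, hb₁, a₁, ha₁, rfl⟩, b₂, hb₂, rfl⟩, hx : g * (b₁ * a₁ * b₂) = a * b⟩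
    have hg' : a * (b * b₂⁻¹) * a₁⁻¹ * b₁⁻¹ = g := by
      rw [← mul_assoc, ← hx]
      group
    exact hg (hg' ▸ mul_mem_mul (mul_mem_mul (mul_mem_mul ha (mul_mem hb (inv_mem hb₂)))
      (inv_mem ha₁)) (inv_mem hb₁))
  have hunion := ncard_union_eq hdisj
  rw [ncard_smul_set] at hunion
  rw [← hunion]
  exact ncard_le_card _

theorem card_add_ncard_mul_sdiff_le [Finite G] :
    Nat.card B + ((B : Set G) * (((A : Set G) * B) \ B)).ncard ≤ ((B : Set G) * A * B).ncard := by
  have hdisj : Disjoint (B : Set G) (B * (((A : Set G) * B) \ B)) := by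
    refine disjoint_left.2 ?_
    rintro _ hb ⟨c, hc, w, hw, rfl⟩
    exact hw.2 (by simpa using mul_mem (inv_mem hc) hb)
  rw [← SetLike.coe_sort_coe, Nat.card_coe_set_eq, ← ncard_union_eq hdisj, mul_assoc]
  refine ncard_le_ncard (union_subset (fun b hb => ?_) (mul_subset_mul_left sdiff_subset))
  exact ⟨b, hb, 1, ⟨1, one_mem A, 1, one_mem B, mul_one 1⟩, mul_one b⟩

theorem mem_of_mul_mem_mul_of_notMem {A B : Subgroup G}
    (hAB : (A : Set G) * B ∩ ((B : Set G) * A) = (A : Set G) ∪ B) {b w : G} (hb : b ∈ B)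
    (hw : w ∈ (A : Set G) * B)
    (hbw : b * w ∈ (A : Set G) * B) (hbw' : b * w ∉ B) : b ∈ A := by
  obtain ⟨a₁, ha₁, b₁, hb₁, hab₁ : a₁ * b₁ = b * w⟩ := hbw
  obtain ⟨a₂, ha₂, b₂, hb₂, rfl : a₂ * b₂ = w⟩ := hw
  have hba : b * a₂ = a₁ * (b₁ * b₂⁻¹) := by
    rw [← mul_assoc, hab₁]
    group
  have hmem : b * a₂ ∈ (A : Set G) ∪ B := by
    rw [← hAB]
    exact ⟨hba ▸ mul_mem_mul ha₁ (mul_mem hb₁ (inv_mem hb₂)), mul_mem_mul hb ha₂⟩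
  rcases hmem with hA | hB
  · simpa using mul_mem hA (inv_mem ha₂)
  · exact absurd (by simpa [mul_assoc] using mul_mem hB hb₂) hbw'

theorem card_mul_ncard_sdiff_le [Finite G] {A B : Subgroup G}
    (hAB : (A : Set G) * B ∩ ((B : Set G) * A) = (A : Set G) ∪ B) :
    Nat.card B * (((A : Set G) * B) \ B).ncard ≤
      Nat.card (A ⊓ B : Subgroup G) * ((B : Set G) * (((A : Set G) * B) \ B)).ncard := by
  simp only [← SetLike.coe_sort_coe, Nat.card_coe_set_eq, coe_inf]
  refine ncard_mul_ncard_le_of_inv_mul_mem fun c₁ hc₁ w₁ hw₁ c₂ hc₂ w₂ hw₂ h => ?_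
  have hw : c₁⁻¹ * c₂ * w₂ = w₁ := by rw [mul_assoc, ← h, inv_mul_cancel_left]
  have hc : c₁⁻¹ * c₂ ∈ B := mul_mem (inv_mem hc₁) hc₂
  exact ⟨mem_of_mul_mem_mul_of_notMem hAB hc hw₂.1 (hw ▸ hw₁.1) (hw ▸ hw₁.2), hc⟩

end Subgroup

theorem stmt3_general {G : Type*} [Group G] [Finite G]
    (A B : Subgroup G) (n k : ℕ)
    (hk : k = Nat.card (A ⊓ B : Subgroup G))
    (hA : Nat.card A = n * k) (hB : Nat.card B = n * k)
    (hG : Nat.card G = n ^ 3 * k)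
    (h4 : ((A : Set G) * (B : Set G)) ∩ ((B : Set G) * (A : Set G)) =
      (A : Set G) ∪ (B : Set G)) :
    ∀ g : G, ∃ a₁ ∈ A, ∃ b₁ ∈ B, ∃ a₂ ∈ A, ∃ b₂ ∈ B, g = a₁ * b₁ * a₂ * b₂ := by
  intro g
  by_contra hg
  replace hg : g ∉ (A : Set G) * B * A * B := by
    rintro ⟨_, ⟨_, ⟨a₁, ha₁, b₁, hb₁, rfl⟩, a₂, ha₂, rfl⟩, b₂, hb₂, rfl⟩
    exact hg ⟨a₁, ha₁, b₁, hb₁, a₂, ha₂, b₂, hb₂, rfl⟩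
  have hnk : 0 < n * k := hA ▸ Nat.card_pos
  have hk0 : 0 < k := pos_of_mul_pos_right hnk n.zero_le
  have hprod := A.card_mul_card_le_card_inf_mul_ncard_mul B
  have hfree := Subgroup.card_mul_ncard_sdiff_le h4
  have hsplit := ncard_sdiff_add_ncard_of_subset (subset_mul_right (B : Set G) A.one_mem)
  have hBAB := A.card_add_ncard_mul_sdiff_le B
  have htotal := A.ncard_mul_add_ncard_mul_mul_le B hg
  have hBset : (B : Set G).ncard = n * k := by rw [← Nat.card_coe_set_eq]; exact hB
  simp only [← hk, hA, hB, hBset, hG] at hprod hfree hsplit hBAB htotal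
  have hAB : n * n * k ≤ ((A : Set G) * B).ncard :=
    Nat.le_of_mul_le_mul_left (by linarith) hk0
  have hBW : n * (((A : Set G) * B) \ B).ncard ≤ ((B : Set G) * (((A : Set G) * B) \ B)).ncard :=
    Nat.le_of_mul_le_mul_left (by linarith) hk0
  nlinarith

/-- Under conditions (1)–(4), `G = ABAB`. -/
theorem stmt3 {G : Type*} [Group G] [Finite G]
    (A B M AM BM : Subgroup G) (n k : ℕ) (hn : 1 < n)
    (hk : k = Nat.card (A ⊓ B : Subgroup G))
    (hA : Nat.card A = n * k) (hB : Nat.card B = n * k) (hM : Nat.card M = n * k)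
    (hG : Nat.card G = n ^ 3 * k)
    (hAM : (AM : Set G) = (A : Set G) * (M : Set G))
    (hBM : (BM : Set G) = (B : Set G) * (M : Set G))
    (hAMcard : Nat.card AM = n ^ 2 * k) (hBMcard : Nat.card BM = n ^ 2 * k)
    (h3 : ∀ g : G, ∃ a ∈ A, ∃ m ∈ M, ∃ b ∈ B, g = a * m * b)
    (h4 : ((A : Set G) * (B : Set G)) ∩ ((B : Set G) * (A : Set G)) =
      (A : Set G) ∪ (B : Set G)) :
    ∀ g : G, ∃ a₁ ∈ A, ∃ b₁ ∈ B, ∃ a₂ ∈ A, ∃ b₂ ∈ B, g = a₁ * b₁ * a₂ * b₂ :=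
  stmt3_general A B n k hk hA hB hG h4
end

section
/- Let G be a finite group with subgroups A, B, M satisfying conditions (1)–(4) of the soft plane construction. Then G is generated by A and B. -/
open scoped Pointwise

/-!
Let `H = ⟨A, B⟩` and suppose `H ≠ G`, so that `2 |H| ≤ |G| = n³k`. The set `A (B \ A) A` lies in
`H` and misses `A`. If `a b c = a' b' c'` with `a, c, a', c' ∈ A` and `b, b' ∈ B \ A`, then
`(a⁻¹ a') b' = b (c' c⁻¹)⁻¹` lies in `AB ∩ BA = A ∪ B`, hence in `B`, so `a⁻¹ a'` and `c' c⁻¹` lie in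
`A ∩ B`: every element of `A (B \ A) A` has at most `k²` such representations, and
`|A (B \ A) A| ≥ (nk)² (n - 1) k / k² = n² (n - 1) k`. Then `|H| ≥ nk + n² (n - 1) k > n³k / 2`.
-/

namespace Subgroup

variable {G : Type*} [Group G] {A B : Subgroup G}

theorem inv_mul_mem_inf_of_mul_mul_eq
    (h : ((A : Set G) * B) ∩ ((B : Set G) * A) = (A : Set G) ∪ B)
    {a b c a' b' c' : G} (ha : a ∈ A) (hc : c ∈ A) (ha' : a' ∈ A) (hc' : c' ∈ A)
    (hb : b ∈ B) (hb' : b' ∈ B) (hb'A : b' ∉ A) (heq : a * b * c = a' * b' * c') :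
    a⁻¹ * a' ∈ A ⊓ B ∧ c' * c⁻¹ ∈ A ⊓ B := by
  set x := a⁻¹ * a'
  set y := c' * c⁻¹
  have hx : x ∈ A := A.mul_mem (A.inv_mem ha) ha'
  have hy : y ∈ A := A.mul_mem hc' (A.inv_mem hc)
  have hxb' : x * b' = b * y⁻¹ := by
    have : a' * b' = a * b * c * c'⁻¹ := by rw [heq]; group
    simp only [x, y, mul_assoc, this]
    group
  have hxb'_mem : x * b' ∈ (A : Set G) ∪ B :=
    h ▸ Set.mem_inter (Set.mul_mem_mul hx hb') (hxb' ▸ Set.mul_mem_mul hb (A.inv_mem hy))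
  rcases hxb'_mem with hA | hB
  · exact absurd (by simpa using A.mul_mem (A.inv_mem hx) hA) hb'A
  · have hxB : x ∈ B := by simpa using B.mul_mem hB (B.inv_mem hb')
    have hyB : y ∈ B := by
      have := B.mul_mem (B.inv_mem hB) hb
      rwa [hxb', mul_inv_rev, inv_inv, inv_mul_cancel_right] at this
    exact ⟨⟨hx, hxB⟩, ⟨hy, hyB⟩⟩

theorem card_mul_card_sdiff_mul_card_le [Finite G]
    (h : ((A : Set G) * B) ∩ ((B : Set G) * A) = (A : Set G) ∪ B) :
    Nat.card A * Nat.card ↥((B : Set G) \ A) * Nat.card A ≤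
      Nat.card ↥((A : Set G) * ((B : Set G) \ A) * A) *
        (Nat.card ↥(A ⊓ B) * Nat.card ↥(A ⊓ B)) := by
  set S := (A : Set G) * ((B : Set G) \ A) * A
  let f : A × ↥((B : Set G) \ A) × A → S := fun p =>
    ⟨(p.1 : G) * p.2.1 * p.2.2, Set.mul_mem_mul (Set.mul_mem_mul p.1.2 p.2.1.2) p.2.2.2⟩
  have hf : Function.Surjective f := by
    rintro ⟨_, ⟨_, ⟨a, ha, b, hb, rfl⟩, c, hc, rfl⟩⟩
    exact ⟨(⟨a, ha⟩, ⟨b, hb⟩, ⟨c, hc⟩), rfl⟩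
  set r := Function.surjInv hf
  have key (p) := inv_mul_mem_inf_of_mul_mul_eq h (r (f p)).1.2 (r (f p)).2.2.2 p.1.2 p.2.2.2
    (r (f p)).2.1.2.1 p.2.1.2.1 p.2.1.2.2
    (congrArg Subtype.val (Function.surjInv_eq hf (f p)))
  -- a triple is recovered from its product `s` and its two correction factors against `r s`
  let φ : A × ↥((B : Set G) \ A) × A → S × ↥(A ⊓ B) × ↥(A ⊓ B) := fun p =>
    (f p, ⟨_, (key p).1⟩, ⟨_, (key p).2⟩)
  have hφ : Function.Injective φ := by
    intro p q hpq
    simp only [φ, Prod.mk.injEq, Subtype.mk.injEq] at hpq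
    obtain ⟨hfpq, h1, h2⟩ := hpq
    rw [hfpq] at h1 h2
    have e1 : p.1 = q.1 := Subtype.ext (mul_left_cancel h1)
    have e3 : p.2.2 = q.2.2 := Subtype.ext (mul_right_cancel h2)
    have e2 : p.2.1 = q.2.1 := by
      have := congrArg Subtype.val hfpq
      simp only [f, e1, e3, mul_left_inj, mul_right_inj] at this
      exact Subtype.ext this
    exact Prod.ext e1 (Prod.ext e2 e3)
  simpa only [Nat.card_prod, mul_assoc] using Nat.card_le_card_of_injective φ hφ

theorem card_add_card_mul_sdiff_mul_le_card_closure [Finite G] :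
    Nat.card A + Nat.card ↥((A : Set G) * ((B : Set G) \ A) * A) ≤
      Nat.card (closure ((A : Set G) ∪ B)) := by
  set H := closure ((A : Set G) ∪ B)
  have hAH : (A : Set G) ⊆ H := fun x hx => subset_closure (Or.inl hx)
  have hSH : (A : Set G) * ((B : Set G) \ A) * A ⊆ H := by
    rintro _ ⟨_, ⟨a, ha, b, hb, rfl⟩, c, hc, rfl⟩
    exact H.mul_mem (H.mul_mem (hAH ha) (subset_closure (Or.inr hb.1))) (hAH hc)
  have hdisj : Disjoint (A : Set G) ((A : Set G) * ((B : Set G) \ A) * A) := by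
    rw [Set.disjoint_left]
    rintro _ hg ⟨_, ⟨a, ha, b, hb, rfl⟩, c, hc, rfl⟩
    have := A.mul_mem (A.mul_mem (A.inv_mem ha) hg) (A.inv_mem hc)
    exact hb.2 (by rwa [show a⁻¹ * (a * b * c) * c⁻¹ = b by group] at this)
  simp only [← SetLike.coe_sort_coe, Nat.card_coe_set_eq]
  rw [← Set.ncard_union_eq hdisj]
  exact Set.ncard_le_ncard (Set.union_subset hAH hSH)

theorem card_sdiff_add_card_inf [Finite G] :
    Nat.card ↥((B : Set G) \ A) + Nat.card ↥(A ⊓ B) = Nat.card B := by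
  simp only [← SetLike.coe_sort_coe, Nat.card_coe_set_eq, coe_inf, Set.inter_comm (A : Set G)]
  rw [add_comm, Set.ncard_inter_add_ncard_sdiff_eq_ncard]

theorem two_mul_card_le_card_of_ne_top [Finite G] {H : Subgroup G} (hH : H ≠ ⊤) :
    2 * Nat.card H ≤ Nat.card G := by
  rw [← H.card_mul_index, mul_comm 2]
  exact Nat.mul_le_mul_left _ (H.one_lt_index_of_ne_top hH)

end Subgroup

theorem stmt4_general {G : Type*} [Group G] [Finite G]
    (A B : Subgroup G) (n k : ℕ) (hn : 1 < n)
    (hk : k = Nat.card (A ⊓ B : Subgroup G))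
    (hA : Nat.card A = n * k) (hB : Nat.card B = n * k)
    (hG : Nat.card G = n ^ 3 * k)
    (h4 : ((A : Set G) * (B : Set G)) ∩ ((B : Set G) * (A : Set G)) =
      (A : Set G) ∪ (B : Set G)) :
    Subgroup.closure ((A : Set G) ∪ (B : Set G)) = ⊤ := by
  by_contra hne
  have hk0 : 0 < k := hk ▸ Nat.card_pos
  have hcount := Subgroup.card_mul_card_sdiff_mul_card_le h4
  have hcover := Subgroup.card_add_card_mul_sdiff_mul_le_card_closure (A := A) (B := B)
  have hdiff := Subgroup.card_sdiff_add_card_inf (A := A) (B := B)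
  have hhalf := Subgroup.two_mul_card_le_card_of_ne_top hne
  rw [← hk, hA] at hcount
  rw [hA] at hcover
  rw [← hk, hB] at hdiff
  rw [hG] at hhalf
  generalize Nat.card ↥((B : Set G) \ A) = d at *
  generalize Nat.card ↥((A : Set G) * ((B : Set G) \ A) * A) = s at *
  have hs : n * n * d ≤ s := by
    refine Nat.le_of_mul_le_mul_right ?_ (Nat.mul_pos hk0 hk0)
    calc n * n * d * (k * k) = n * k * d * (n * k) := by ring
      _ ≤ s * (k * k) := hcount
  have hcardG : n ^ 3 * k = n * n * (d + k) := by rw [hdiff]; ring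
  have hkd : k ≤ d := by nlinarith
  nlinarith [Nat.mul_le_mul_left (n * n) hkd]

/-- Under conditions (1)–(4), `G = ⟨A, B⟩`. -/
theorem stmt4 {G : Type*} [Group G] [Finite G]
    (A B M AM BM : Subgroup G) (n k : ℕ) (hn : 1 < n)
    (hk : k = Nat.card (A ⊓ B : Subgroup G))
    (hA : Nat.card A = n * k) (hB : Nat.card B = n * k) (hM : Nat.card M = n * k)
    (hG : Nat.card G = n ^ 3 * k)
    (hAM : (AM : Set G) = (A : Set G) * (M : Set G))
    (hBM : (BM : Set G) = (B : Set G) * (M : Set G))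
    (hAMcard : Nat.card AM = n ^ 2 * k) (hBMcard : Nat.card BM = n ^ 2 * k)
    (h3 : ∀ g : G, ∃ a ∈ A, ∃ m ∈ M, ∃ b ∈ B, g = a * m * b)
    (h4 : ((A : Set G) * (B : Set G)) ∩ ((B : Set G) * (A : Set G)) =
      (A : Set G) ∪ (B : Set G)) :
    Subgroup.closure ((A : Set G) ∪ (B : Set G)) = ⊤ :=
  stmt4_general A B n k hn hk hA hB hG h4
end

section
/- Let G be a finite group with subgroups A, B, M satisfying conditions (1)–(4) of the soft plane construction. Then A ∩ M = A ∩ B = B ∩ M. -/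
open scoped Pointwise

/-!
The product formula `|HK| · |H ∩ K| = |H| · |K|` for subgroups turns the numerical conditions into
`|A ∩ M| = k` (from `|AM| = n²k`) and `|A ∩ BM| = k` (from `BM · A = G`). Both `A ∩ B` and `A ∩ M`
lie in `A ∩ BM`, and all three have order `k`, so they coincide. Since `G = AMB` also gives
`G = BMA` by inversion, the same argument with `A` and `B` exchanged gives `B ∩ M = B ∩ A`.
-/

open Set

namespace Subgroup

variable {G : Type*} [Group G]

theorem coe_mul_eq_preimage_orbit (H K : Subgroup G) :
    (H : Set G) * K = QuotientGroup.mk ⁻¹' MulAction.orbit H ((1 : G) : G ⧸ K) := by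
  ext g
  simp only [mem_preimage, MulAction.mem_orbit_iff, Subtype.exists, Set.mem_mul, SetLike.mem_coe]
  constructor
  · rintro ⟨h, hh, k, hk, rfl⟩
    exact ⟨h, hh, QuotientGroup.eq.mpr (by simpa using hk)⟩
  · rintro ⟨h, hh, hg⟩
    have hk : h⁻¹ * g ∈ K := by simpa using QuotientGroup.eq.mp hg
    exact ⟨h, hh, h⁻¹ * g, hk, mul_inv_cancel_left h g⟩

theorem stabilizer_coe_one_quotient (H K : Subgroup G) :
    MulAction.stabilizer H ((1 : G) : G ⧸ K) = K.subgroupOf H := by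
  ext h
  rw [MulAction.mem_stabilizer_iff, mem_subgroupOf]
  exact (QuotientGroup.eq (a := (h : G) * 1) (b := 1)).trans (by simp)

theorem card_coe_mul (H K : Subgroup G) :
    Nat.card ((H : Set G) * (K : Set G)) = Nat.card K * K.relIndex H := by
  rw [coe_mul_eq_preimage_orbit, QuotientGroup.card_preimage_mk, Nat.card_coe_set_eq,
    ← MulAction.index_stabilizer, stabilizer_coe_one_quotient, relIndex]

theorem card_coe_mul_mul_card_inf (H K : Subgroup G) :
    Nat.card ((H : Set G) * (K : Set G)) * Nat.card (H ⊓ K : Subgroup G) =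
      Nat.card H * Nat.card K := by
  have h := relIndex_inf_mul_relIndex ⊥ K H
  rw [relIndex_bot_left, bot_inf_eq, relIndex_bot_left] at h
  rw [card_coe_mul, inf_comm, ← h]
  ring

theorem coe_mul_mul_eq_univ_symm {H K L : Subgroup G}
    (h : (H : Set G) * (K : Set G) * (L : Set G) = univ) :
    (L : Set G) * (K : Set G) * (H : Set G) = univ := by
  simpa [mul_inv_rev, mul_assoc] using congrArg Inv.inv h

theorem left_le_of_coe_eq_mul {H K L : Subgroup G} (hL : (L : Set G) = H * K) : H ≤ L :=
  fun x hx => (hL ▸ subset_mul_left (H : Set G) K.one_mem hx : x ∈ (L : Set G))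

theorem right_le_of_coe_eq_mul {H K L : Subgroup G} (hL : (L : Set G) = H * K) : K ≤ L :=
  fun x hx => (hL ▸ subset_mul_right (K : Set G) H.one_mem hx : x ∈ (L : Set G))

theorem inf_eq_inf_of_card_eq [Finite G] {A B M L : Subgroup G} (hBL : B ≤ L) (hML : M ≤ L)
    (hLA : (L : Set G) * (A : Set G) = univ)
    (hAM : Nat.card ((A : Set G) * (M : Set G)) * Nat.card (A ⊓ B : Subgroup G) =
      Nat.card A * Nat.card M)
    (hL : Nat.card L * Nat.card A = Nat.card G * Nat.card (A ⊓ B : Subgroup G)) :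
    A ⊓ M = A ⊓ B := by
  have hAM_inf : Nat.card (A ⊓ M : Subgroup G) = Nat.card (A ⊓ B : Subgroup G) := by
    have h := card_coe_mul_mul_card_inf A M
    rw [← hAM] at h
    have : Nonempty ((A : Set G) * (M : Set G) : Set G) :=
      ⟨⟨1, 1, A.one_mem, 1, M.one_mem, mul_one 1⟩⟩
    exact Nat.eq_of_mul_eq_mul_left Nat.card_pos h
  have hAL_inf : Nat.card (A ⊓ L : Subgroup G) = Nat.card (A ⊓ B : Subgroup G) := by
    have h := card_coe_mul_mul_card_inf L A
    rw [hLA, Nat.card_univ, hL, inf_comm] at h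
    exact Nat.eq_of_mul_eq_mul_left Nat.card_pos h
  have hM : A ⊓ M = A ⊓ L := eq_of_le_of_card_ge (inf_le_inf_left A hML) (by rw [hAL_inf, hAM_inf])
  have hB : A ⊓ B = A ⊓ L := eq_of_le_of_card_ge (inf_le_inf_left A hBL) hAL_inf.le
  rw [hM, hB]

end Subgroup

open Subgroup

theorem stmt5_general {G : Type*} [Group G] [Finite G]
    (A B M AM BM : Subgroup G) (n k : ℕ)
    (hk : k = Nat.card (A ⊓ B : Subgroup G))
    (hA : Nat.card A = n * k) (hB : Nat.card B = n * k) (hM : Nat.card M = n * k)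
    (hG : Nat.card G = n ^ 3 * k)
    (hAM : (AM : Set G) = (A : Set G) * (M : Set G))
    (hBM : (BM : Set G) = (B : Set G) * (M : Set G))
    (hAMcard : Nat.card AM = n ^ 2 * k) (hBMcard : Nat.card BM = n ^ 2 * k)
    (h3 : ∀ g : G, ∃ a ∈ A, ∃ m ∈ M, ∃ b ∈ B, g = a * m * b) :
    A ⊓ M = A ⊓ B ∧ A ⊓ B = B ⊓ M := by
  have hAMB : (A : Set G) * (M : Set G) * (B : Set G) = univ :=
    eq_univ_of_forall fun g => by
      obtain ⟨a, ha, m, hm, b, hb, rfl⟩ := h3 g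
      exact mul_mem_mul (mul_mem_mul ha hm) hb
  have hBMA := coe_mul_mul_eq_univ_symm hAMB
  have hAMc : Nat.card ((A : Set G) * (M : Set G) : Set G) = n ^ 2 * k := hAM ▸ hAMcard
  have hBMc : Nat.card ((B : Set G) * (M : Set G) : Set G) = n ^ 2 * k := hBM ▸ hBMcard
  rw [← hAM] at hAMB
  rw [← hBM] at hBMA
  have hAM_inf : A ⊓ M = A ⊓ B :=
    inf_eq_inf_of_card_eq (left_le_of_coe_eq_mul hBM) (right_le_of_coe_eq_mul hBM) hBMA
      (by rw [hAMc, ← hk, hA, hM]; ring) (by rw [hBMcard, hA, hG, ← hk]; ring)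
  have hBM_inf : B ⊓ M = B ⊓ A :=
    inf_eq_inf_of_card_eq (left_le_of_coe_eq_mul hAM) (right_le_of_coe_eq_mul hAM) hAMB
      (by rw [hBMc, inf_comm, ← hk, hB, hM]; ring) (by rw [hAMcard, hB, hG, inf_comm, ← hk]; ring)
  exact ⟨hAM_inf, (hBM_inf.trans (inf_comm B A)).symm⟩

/-- Under conditions (1)–(4), `A ∩ M = A ∩ B = B ∩ M`. -/
theorem stmt5 {G : Type*} [Group G] [Finite G]
    (A B M AM BM : Subgroup G) (n k : ℕ) (hn : 1 < n)
    (hk : k = Nat.card (A ⊓ B : Subgroup G))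
    (hA : Nat.card A = n * k) (hB : Nat.card B = n * k) (hM : Nat.card M = n * k)
    (hG : Nat.card G = n ^ 3 * k)
    (hAM : (AM : Set G) = (A : Set G) * (M : Set G))
    (hBM : (BM : Set G) = (B : Set G) * (M : Set G))
    (hAMcard : Nat.card AM = n ^ 2 * k) (hBMcard : Nat.card BM = n ^ 2 * k)
    (h3 : ∀ g : G, ∃ a ∈ A, ∃ m ∈ M, ∃ b ∈ B, g = a * m * b)
    (h4 : ((A : Set G) * (B : Set G)) ∩ ((B : Set G) * (A : Set G)) =
      (A : Set G) ∪ (B : Set G)) :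
    A ⊓ M = A ⊓ B ∧ A ⊓ B = B ⊓ M :=
  stmt5_general A B M AM BM n k hk hA hB hM hG hAM hBM hAMcard hBMcard h3
end

section
/- Let G be a finite group with subgroups A, B, M satisfying conditions (1)–(4) of the soft plane construction. Then AM = G \ (A·(B\A)·A), that is, the subgroup AM is exactly the complement in G of the set of products a₁ b a₂ with a₁, a₂ ∈ A and b ∈ B \ A. -/
open scoped Pointwise

/-!
Since `A ≤ AM` and `AM * B = G`, the product formula gives `|AM ⊓ B| ≤ |AM| |B| / |G| = k`, so
`AM ⊓ B = A ⊓ B`. Hence no `b ∈ B \ A` lies in `AM`, and `AM` is disjoint from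
`S = A * (B \ A) * A`. The condition `AB ∩ BA = A ∪ B` forces two factorisations
`a₁ b a₂ = a₁' b' a₂'` with `b, b' ∈ B \ A` to have `a₁'⁻¹ a₁, a₂ a₂'⁻¹ ∈ A ⊓ B`, so
`|S| ≥ |A|² |B \ A| / k² = n³k - n²k = |G| - |AM|`.
-/

theorem Set.eq_compl_of_disjoint_of_card_le {α : Type*} [Finite α] {s t : Set α}
    (hst : Disjoint s t) (hcard : Nat.card α ≤ Nat.card s + Nat.card t) : s = tᶜ := by
  refine Set.eq_of_subset_of_ncard_le hst.subset_compl_right ?_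
  rw [Set.ncard_compl]
  simp only [Nat.card_coe_set_eq] at hcard
  omega

namespace Subgroup

variable {G : Type*} [Group G]

theorem card_mul_mul_card_inf_le [Finite G] (H K : Subgroup G) :
    Nat.card ((H : Set G) * (K : Set G)) * Nat.card (H ⊓ K : Subgroup G) ≤
      Nat.card H * Nat.card K := by
  choose h hh k hk hhk using fun y : ((H : Set G) * (K : Set G) : Set G) => Set.mem_mul.1 y.2
  rw [← Nat.card_prod, ← Nat.card_prod]
  refine Nat.card_le_card_of_injective
    (fun p => (⟨h p.1 * p.2, H.mul_mem (hh p.1) (mem_inf.1 p.2.2).1⟩,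
      ⟨(p.2 : G)⁻¹ * k p.1, K.mul_mem (K.inv_mem (mem_inf.1 p.2.2).2) (hk p.1)⟩)) ?_
  rintro ⟨y, d⟩ ⟨y', d'⟩ he
  simp only [Prod.mk.injEq, Subtype.mk.injEq] at he
  obtain rfl : y = y' := Subtype.ext <| by
    rw [← hhk y, ← hhk y']
    calc h y * k y = h y * d * ((d : G)⁻¹ * k y) := by group
      _ = h y' * d' * ((d' : G)⁻¹ * k y') := by rw [he.1, he.2]
      _ = h y' * k y' := by group
  exact Prod.ext rfl (Subtype.ext (mul_left_cancel he.1))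

theorem card_coe_diff_add_card_inf [Finite G] (A B : Subgroup G) :
    Nat.card ↥((B : Set G) \ (A : Set G)) + Nat.card (A ⊓ B : Subgroup G) = Nat.card B := by
  rw [add_comm, ← SetLike.coe_sort_coe, ← SetLike.coe_sort_coe B, coe_inf, Set.inter_comm]
  simp only [Nat.card_coe_set_eq]
  exact Set.ncard_inter_add_ncard_sdiff_eq_ncard (B : Set G) (A : Set G)

variable {A B : Subgroup G}

theorem inf_le_of_coe_mul_eq_univ [Finite G] {H : Subgroup G} (hAH : A ≤ H)
    (hHB : (H : Set G) * (B : Set G) = Set.univ)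
    (hcard : Nat.card H * Nat.card B ≤ Nat.card G * Nat.card (A ⊓ B : Subgroup G)) :
    H ⊓ B ≤ A := by
  have h := card_mul_mul_card_inf_le H B
  rw [hHB, Nat.card_univ] at h
  have hle : Nat.card (H ⊓ B : Subgroup G) ≤ Nat.card (A ⊓ B : Subgroup G) :=
    Nat.le_of_mul_le_mul_left (h.trans hcard) Nat.card_pos
  exact (eq_of_le_of_card_ge (inf_le_inf_right B hAH) hle) ▸ inf_le_left

theorem disjoint_coe_mul_diff_mul {H : Subgroup G} (hAH : A ≤ H) (hHB : H ⊓ B ≤ A) :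
    Disjoint (H : Set G) ((A : Set G) * ((B : Set G) \ (A : Set G)) * (A : Set G)) := by
  rw [Set.disjoint_right]
  rintro _ ⟨_, ⟨a₁, ha₁, b, ⟨hbB, hbA⟩, rfl⟩, a₂, ha₂, rfl⟩ hH
  have hbH : b ∈ H := by
    rw [show b = a₁⁻¹ * (a₁ * b * a₂) * a₂⁻¹ by group]
    exact H.mul_mem (H.mul_mem (H.inv_mem (hAH ha₁)) hH) (H.inv_mem (hAH ha₂))
  exact hbA (hHB (mem_inf.2 ⟨hbH, hbB⟩))

section SoftPlane

variable (hAB : ((A : Set G) * (B : Set G)) ∩ ((B : Set G) * (A : Set G)) =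
    (A : Set G) ∪ (B : Set G))
include hAB

theorem mem_of_mul_mem_mul_left {a b : G} (ha : a ∈ A) (hbB : b ∈ B) (hbA : b ∉ A)
    (hab : a * b ∈ (B : Set G) * (A : Set G)) : a ∈ B := by
  have : a * b ∈ (A : Set G) ∪ (B : Set G) := by
    rw [← hAB]; exact ⟨Set.mul_mem_mul ha hbB, hab⟩
  rcases this with h | h
  · exact absurd (by simpa using A.mul_mem (A.inv_mem ha) h) hbA
  · simpa using B.mul_mem h (B.inv_mem hbB)

theorem mem_of_mul_mem_mul_right {a b : G} (ha : a ∈ A) (hbB : b ∈ B) (hbA : b ∉ A)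
    (hba : b * a ∈ (A : Set G) * (B : Set G)) : a ∈ B := by
  have : b * a ∈ (A : Set G) ∪ (B : Set G) := by
    rw [← hAB]; exact ⟨hba, Set.mul_mem_mul hbB ha⟩
  rcases this with h | h
  · exact absurd (by simpa using A.mul_mem h (A.inv_mem ha)) hbA
  · simpa using B.mul_mem (B.inv_mem hbB) h

theorem inv_mul_mem_and_mul_inv_mem_of_mul_mul_eq {a₁ a₂ a₁' a₂' b b' : G}
    (ha₁ : a₁ ∈ A) (ha₂ : a₂ ∈ A) (ha₁' : a₁' ∈ A) (ha₂' : a₂' ∈ A)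
    (hb : b ∈ (B : Set G) \ (A : Set G)) (hb' : b' ∈ (B : Set G) \ (A : Set G))
    (h : a₁ * b * a₂ = a₁' * b' * a₂') : a₁'⁻¹ * a₁ ∈ B ∧ a₂ * a₂'⁻¹ ∈ B := by
  constructor
  · refine mem_of_mul_mem_mul_left hAB (A.mul_mem (A.inv_mem ha₁') ha₁) hb.1 hb.2 ?_
    rw [show a₁'⁻¹ * a₁ * b = b' * (a₂' * a₂⁻¹) by
      rw [show a₁'⁻¹ * a₁ * b = a₁'⁻¹ * (a₁ * b * a₂) * a₂⁻¹ by group, h]; group]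
    exact Set.mul_mem_mul hb'.1 (A.mul_mem ha₂' (A.inv_mem ha₂))
  · refine mem_of_mul_mem_mul_right hAB (A.mul_mem ha₂ (A.inv_mem ha₂')) hb.1 hb.2 ?_
    rw [show b * (a₂ * a₂'⁻¹) = a₁⁻¹ * a₁' * b' by
      rw [show b * (a₂ * a₂'⁻¹) = a₁⁻¹ * (a₁ * b * a₂) * a₂'⁻¹ by group, h]; group]
    exact Set.mul_mem_mul (A.mul_mem (A.inv_mem ha₁) ha₁') hb'.1

theorem card_mul_card_diff_mul_card_le [Finite G] :
    Nat.card A * Nat.card ↥((B : Set G) \ (A : Set G)) * Nat.card A ≤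
      Nat.card ↥((A : Set G) * ((B : Set G) \ (A : Set G)) * (A : Set G)) *
        Nat.card (A ⊓ B : Subgroup G) ^ 2 := by
  set D := (B : Set G) \ (A : Set G)
  set S := (A : Set G) * D * (A : Set G)
  choose x hx a₂ ha₂ hxa₂ using fun y : S => Set.mem_mul.1 y.2
  choose a₁ ha₁ b hb ha₁b using fun y : S => Set.mem_mul.1 (hx y)
  have hrep (y : S) : a₁ y * b y * a₂ y = y := by rw [ha₁b, hxa₂]
  have hoffsets (p : (A × D) × A) := inv_mul_mem_and_mul_inv_mem_of_mul_mul_eq hAB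
    (ha₁ _) (ha₂ _) p.1.1.2 p.2.2 (hb _) p.1.2.2
    (hrep ⟨p.1.1 * p.1.2 * p.2, Set.mul_mem_mul (Set.mul_mem_mul p.1.1.2 p.1.2.2) p.2.2⟩)
  -- `p` is recovered from its product `y` and its offsets from the chosen factorisation of `y`.
  let f (p : (A × D) × A) : S × (A ⊓ B : Subgroup G) × (A ⊓ B : Subgroup G) :=
    (⟨p.1.1 * p.1.2 * p.2, Set.mul_mem_mul (Set.mul_mem_mul p.1.1.2 p.1.2.2) p.2.2⟩,
      ⟨(p.1.1 : G)⁻¹ * a₁ _, mem_inf.2 ⟨A.mul_mem (A.inv_mem p.1.1.2) (ha₁ _), (hoffsets p).1⟩⟩,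
      ⟨a₂ _ * (p.2 : G)⁻¹, mem_inf.2 ⟨A.mul_mem (ha₂ _) (A.inv_mem p.2.2), (hoffsets p).2⟩⟩)
  have hf : Function.Injective f := by
    rintro ⟨⟨a, d⟩, a'⟩ ⟨⟨c, e⟩, c'⟩ he
    simp only [f, Prod.mk.injEq, Subtype.mk.injEq] at he
    obtain ⟨hy, h₁, h₂⟩ := he
    simp only [hy, mul_left_inj, mul_right_inj, inv_inj] at h₁ h₂
    rw [h₁, h₂] at hy
    exact Prod.ext (Prod.ext (Subtype.ext h₁) (Subtype.ext (mul_left_cancel (mul_right_cancel hy))))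
      (Subtype.ext h₂)
  simpa only [Nat.card_prod, sq, mul_assoc] using Nat.card_le_card_of_injective f hf

end SoftPlane

end Subgroup

theorem stmt7_general {G : Type*} [Group G] [Finite G]
    (A B M AM : Subgroup G) (n k : ℕ)
    (hk : k = Nat.card (A ⊓ B : Subgroup G))
    (hA : Nat.card A = n * k) (hB : Nat.card B = n * k)
    (hG : Nat.card G = n ^ 3 * k)
    (hAM : (AM : Set G) = (A : Set G) * (M : Set G))
    (hAMcard : Nat.card AM = n ^ 2 * k)
    (h3 : ∀ g : G, ∃ a ∈ A, ∃ m ∈ M, ∃ b ∈ B, g = a * m * b)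
    (h4 : ((A : Set G) * (B : Set G)) ∩ ((B : Set G) * (A : Set G)) =
      (A : Set G) ∪ (B : Set G)) :
    (AM : Set G) =
      Set.univ \ ((A : Set G) * (((B : Set G) \ (A : Set G))) * (A : Set G)) := by
  have hA_le : A ≤ AM := fun a ha => by
    rw [← SetLike.mem_coe, hAM]; exact ⟨a, ha, 1, M.one_mem, mul_one a⟩
  have hAMB : (AM : Set G) * (B : Set G) = Set.univ := Set.eq_univ_of_forall fun g => by
    obtain ⟨a, ha, m, hm, b, hb, rfl⟩ := h3 g
    exact Set.mul_mem_mul (hAM ▸ Set.mul_mem_mul ha hm) hb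
  have hAMB_le : AM ⊓ B ≤ A := Subgroup.inf_le_of_coe_mul_eq_univ hA_le hAMB <| by
    rw [hAMcard, hB, hG, ← hk]; exact Nat.le_of_eq (by ring)
  have hD := Subgroup.card_coe_diff_add_card_inf A B
  have hS := Subgroup.card_mul_card_diff_mul_card_le h4
  rw [← hk, hB] at hD
  rw [hA, ← hk] at hS
  have hk0 : 0 < k := hk ▸ Nat.card_pos
  rw [← Set.compl_eq_univ_sdiff]
  refine Set.eq_compl_of_disjoint_of_card_le
    (Subgroup.disjoint_coe_mul_diff_mul hA_le hAMB_le) ?_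
  rw [SetLike.coe_sort_coe, hAMcard, hG]
  set D := (B : Set G) \ (A : Set G)
  have hS' : n ^ 2 * Nat.card D ≤ Nat.card ↥((A : Set G) * D * (A : Set G)) :=
    Nat.le_of_mul_le_mul_right (hS.trans_eq' (by ring)) (pow_pos hk0 2)
  calc n ^ 3 * k = n ^ 2 * k + n ^ 2 * Nat.card D := by
        rw [← mul_add, add_comm k, hD]; ring
    _ ≤ _ := Nat.add_le_add_left hS' _

/-- Under conditions (1)–(4), `AM = G \ (A·(B\A)·A)`. -/
theorem stmt7 {G : Type*} [Group G] [Finite G]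
    (A B M AM BM : Subgroup G) (n k : ℕ) (hn : 1 < n)
    (hk : k = Nat.card (A ⊓ B : Subgroup G))
    (hA : Nat.card A = n * k) (hB : Nat.card B = n * k) (hM : Nat.card M = n * k)
    (hG : Nat.card G = n ^ 3 * k)
    (hAM : (AM : Set G) = (A : Set G) * (M : Set G))
    (hBM : (BM : Set G) = (B : Set G) * (M : Set G))
    (hAMcard : Nat.card AM = n ^ 2 * k) (hBMcard : Nat.card BM = n ^ 2 * k)
    (h3 : ∀ g : G, ∃ a ∈ A, ∃ m ∈ M, ∃ b ∈ B, g = a * m * b)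
    (h4 : ((A : Set G) * (B : Set G)) ∩ ((B : Set G) * (A : Set G)) =
      (A : Set G) ∪ (B : Set G)) :
    (AM : Set G) =
      Set.univ \ ((A : Set G) * (((B : Set G) \ (A : Set G))) * (A : Set G)) :=
  stmt7_general A B M AM n k hk hA hB hG hAM hAMcard h3 h4
end

section
/- Let G be a finite group acting as a collineation group on a projective plane of order n with a flag-orbit of size n³. If B is the stabilizer of a line in a flag of that orbit and A the stabilizer of the point, then |G : B| = n², |B : A∩B| = n, and |G| = n³·|A∩B|. -/
/-! The stabilizer of the flag is `A ⊓ B`, so by orbit–stabilizer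
`|B : A ⊓ B| · |G : B| = |G : A ⊓ B| = n³`. The factor `|G : B|` is the length of the orbit of
the line, at most `n² + n + 1`, and `|B : A ⊓ B|` is the length of the orbit of the point
under `B`, which stays on the line and so is at most `n + 1`. Within these bounds `n³` only
factors as `n · n²`: a first factor below `n` leaves a cofactor above `n² + n + 1`, and `n + 1`
is coprime to `n³`. -/

theorem eq_and_eq_sq_of_mul_eq_cube {n a b : ℕ} (hb₀ : 0 < b) (ha₀ : 0 < a)
    (hab : b * a = n ^ 3) (hb : b ≤ n + 1) (ha : a ≤ n ^ 2 + n + 1) : b = n ∧ a = n ^ 2 := by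
  obtain ⟨m, rfl⟩ : ∃ m, n = m + 1 :=
    Nat.exists_eq_add_one.mpr ((pow_pos_iff three_ne_zero).mp (hab ▸ Nat.mul_pos hb₀ ha₀))
  have hb_ge : m + 1 ≤ b := by
    by_contra! hlt
    have : b * a ≤ m * ((m + 1) ^ 2 + (m + 1) + 1) := Nat.mul_le_mul (by omega) ha
    nlinarith
  have hb_ne : b ≠ m + 2 := by
    rintro rfl
    have hcop : (m + 2).Coprime ((m + 1) ^ 3) :=
      (Nat.coprime_self_add_left.mpr (Nat.coprime_one_left _)).pow_right 3
    have := hcop.eq_one_of_dvd (Dvd.intro a hab)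
    omega
  obtain rfl : b = m + 1 := by omega
  exact ⟨rfl, Nat.eq_of_mul_eq_mul_left hb₀ (by rw [hab]; ring)⟩

namespace MulAction

variable {G α : Type*} [Group G] [MulAction G α]

theorem stabilizer_subgroupOf (H : Subgroup G) (a : α) :
    (stabilizer G a).subgroupOf H = stabilizer H a := by
  ext; rfl

theorem relIndex_stabilizer (H : Subgroup G) (a : α) :
    (stabilizer G a).relIndex H = (orbit H a).ncard := by
  rw [Subgroup.relIndex, stabilizer_subgroupOf, index_stabilizer]

variable {H : Subgroup G} {a : α} {s : Set α}

theorem relIndex_stabilizer_pos (hs : s.Finite) (h : orbit H a ⊆ s) :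
    0 < (stabilizer G a).relIndex H := by
  rw [relIndex_stabilizer]
  exact (Set.ncard_pos (hs.subset h)).mpr (nonempty_orbit a)

theorem relIndex_stabilizer_le_ncard (hs : s.Finite) (h : orbit H a ⊆ s) :
    (stabilizer G a).relIndex H ≤ s.ncard := by
  rw [relIndex_stabilizer]
  exact Set.ncard_le_ncard h hs

theorem stabilizer_prod {β : Type*} [MulAction G β] (a : α) (b : β) :
    stabilizer G (a, b) = stabilizer G a ⊓ stabilizer G b := by
  ext g
  simp [Prod.ext_iff]

end MulAction

theorem stmt11_general {G P L : Type*} [Group G] [MulAction G P] [MulAction G L]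
    (incid : P → L → Prop) (n : ℕ)
    (hlns : Nat.card L = n ^ 2 + n + 1)
    (hline : ∀ l : L, Nat.card {p : P // incid p l} = n + 1)
    (hpres : ∀ (g : G) (p : P) (l : L), incid (g • p) (g • l) ↔ incid p l)
    (p₀ : P) (l₀ : L) (hflag : incid p₀ l₀)
    (horbit : Nat.card (MulAction.orbit G ((p₀, l₀) : P × L)) = n ^ 3) :
    (MulAction.stabilizer G l₀).index = n ^ 2 ∧
    (MulAction.stabilizer G p₀).relIndex (MulAction.stabilizer G l₀) = n ∧
    Nat.card G = n ^ 3 *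
      Nat.card (MulAction.stabilizer G p₀ ⊓ MulAction.stabilizer G l₀ : Subgroup G) := by
  set A := MulAction.stabilizer G p₀
  set B := MulAction.stabilizer G l₀
  have hflag_index : (A ⊓ B).index = n ^ 3 := by
    rw [← MulAction.stabilizer_prod, MulAction.index_stabilizer, ← Nat.card_coe_set_eq, horbit]
  have hprod : A.relIndex B * B.index = n ^ 3 := by
    rw [← Subgroup.inf_relIndex_right, Subgroup.relIndex_mul_index inf_le_right, hflag_index]
  have hL : (Set.univ : Set L).Finite :=
    Set.finite_of_ncard_ne_zero (by rw [Set.ncard_univ, hlns]; omega)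
  have hline_l₀ : {p : P | incid p l₀}.ncard = n + 1 := by
    rw [← Nat.card_coe_set_eq]
    exact hline l₀
  have hl₀ : {p : P | incid p l₀}.Finite := Set.finite_of_ncard_ne_zero (by omega)
  have horbit_l₀ : MulAction.orbit B p₀ ⊆ {p : P | incid p l₀} := by
    rintro _ ⟨b, rfl⟩
    have := (hpres b p₀ l₀).mpr hflag
    rwa [show (b : G) • l₀ = l₀ from b.2] at this
  have hB_le : B.index ≤ n ^ 2 + n + 1 := by
    rw [← Subgroup.relIndex_top_right, ← hlns, ← Set.ncard_univ]
    exact MulAction.relIndex_stabilizer_le_ncard hL (Set.subset_univ _)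
  have hAB_le : A.relIndex B ≤ n + 1 := by
    rw [← hline_l₀]
    exact MulAction.relIndex_stabilizer_le_ncard hl₀ horbit_l₀
  obtain ⟨hAB, hB⟩ := eq_and_eq_sq_of_mul_eq_cube
    (MulAction.relIndex_stabilizer_pos hl₀ horbit_l₀)
    (by rw [← Subgroup.relIndex_top_right]
        exact MulAction.relIndex_stabilizer_pos hL (Set.subset_univ _))
    hprod hAB_le hB_le
  exact ⟨hB, hAB, by rw [← Subgroup.index_mul_card (A ⊓ B), hflag_index]⟩

/-- If a finite group `G` acts on a projective plane of order `n` with a flag-orbit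
of size `n³`, and `A`, `B` are the stabilizers of the point and line of a flag in that
orbit, then `|G : B| = n²`, `|B : A ∩ B| = n`, and `|G| = n³·|A ∩ B|`. -/
theorem stmt11 {G P L : Type*} [Group G] [Finite G] [Finite P] [Finite L]
    [MulAction G P] [MulAction G L]
    (incid : P → L → Prop) (n : ℕ) (hn : 1 < n)
    (hpts : Nat.card P = n ^ 2 + n + 1) (hlns : Nat.card L = n ^ 2 + n + 1)
    (hline : ∀ l : L, Nat.card {p : P // incid p l} = n + 1)
    (hpoint : ∀ p : P, Nat.card {l : L // incid p l} = n + 1)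
    (huniq : ∀ p q : P, p ≠ q → ∃! l : L, incid p l ∧ incid q l)
    (hpres : ∀ (g : G) (p : P) (l : L), incid (g • p) (g • l) ↔ incid p l)
    (p₀ : P) (l₀ : L) (hflag : incid p₀ l₀)
    (horbit : Nat.card (MulAction.orbit G ((p₀, l₀) : P × L)) = n ^ 3) :
    (MulAction.stabilizer G l₀).index = n ^ 2 ∧
    (MulAction.stabilizer G p₀).relIndex (MulAction.stabilizer G l₀) = n ∧
    Nat.card G = n ^ 3 *
      Nat.card (MulAction.stabilizer G p₀ ⊓ MulAction.stabilizer G l₀ : Subgroup G) :=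
  stmt11_general incid n hlns hline hpres p₀ l₀ hflag horbit
end

section
/- Let A and B be subgroups of a group G such that AB ∩ BA = A ∪ B. If b₁, b₂ ∈ B, a₁, a₂ ∈ A and b ∈ B \ A satisfy b₁a₁ = b₂a₂b, then Ba₁ = B. -/
open scoped Pointwise

theorem Subgroup.mem_of_mul_mem_mul_of_notMem_s12 {G : Type*} [Group G] {A B : Subgroup G}
    (hAB : (A : Set G) * B ∩ ((B : Set G) * A) ⊆ A ∪ B) {a b : G}
    (ha : a ∈ A) (hb : b ∈ B) (hbA : b ∉ A) (hab : a * b ∈ (B : Set G) * A) : a ∈ B := by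
  rcases hAB ⟨Set.mul_mem_mul ha hb, hab⟩ with habA | habB
  · exact absurd ((A.mul_mem_cancel_left ha).1 habA) hbA
  · exact (B.mul_mem_cancel_right hb).1 habB

/-- If `AB ∩ BA = A ∪ B`, `b₁, b₂ ∈ B`, `a₁, a₂ ∈ A`, `b ∈ B \ A` and
`b₁a₁ = b₂a₂b`, then `Ba₁ = B`. -/
theorem stmt12 {G : Type*} [Group G] (A B : Subgroup G)
    (h4 : ((A : Set G) * (B : Set G)) ∩ ((B : Set G) * (A : Set G)) =
      (A : Set G) ∪ (B : Set G))
    (b₁ b₂ b a₁ a₂ : G) (hb₁ : b₁ ∈ B) (hb₂ : b₂ ∈ B) (hb : b ∈ B) (hbA : b ∉ A)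
    (ha₁ : a₁ ∈ A) (ha₂ : a₂ ∈ A) (heq : b₁ * a₁ = b₂ * a₂ * b) :
    (B : Set G) * {a₁} = (B : Set G) := by
  have ha₂b : a₂ * b ∈ (B : Set G) * A :=
    ⟨b₂⁻¹ * b₁, B.mul_mem (B.inv_mem hb₂) hb₁, a₁, ha₁,
      (by rw [mul_assoc, heq]; group : b₂⁻¹ * b₁ * a₁ = a₂ * b)⟩
  have ha₂B : a₂ ∈ B := Subgroup.mem_of_mul_mem_mul_of_notMem_s12 h4.subset ha₂ hb hbA ha₂b
  have ha₁B : a₁ ∈ B :=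
    (B.mul_mem_cancel_left hb₁).1 (heq ▸ B.mul_mem (B.mul_mem hb₂ ha₂B) hb)
  exact Subgroup.subgroup_mul_singleton ha₁B
end

section
/- Let G be a finite group with subgroups A, B, M satisfying conditions (1)–(4). Then the number of right cosets of A in G is n², the number of right cosets of BM in G is n, and hence the total number n² + n + 1 (adding ∞) matches the point count of a projective plane of order n. -/
open scoped Pointwise

theorem Subgroup.index_eq_of_card_eq_of_card_eq_mul {G : Type*} [Group G] [Finite G]
    (H : Subgroup G) {a b : ℕ} (hH : Nat.card H = a) (hG : Nat.card G = a * b) :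
    H.index = b := by
  have ha : 0 < a := hH ▸ Nat.card_pos
  exact Nat.eq_of_mul_eq_mul_left ha (by rw [← hG, ← hH, H.card_mul_index])

theorem stmt15_general {G : Type*} [Group G] [Finite G]
    (A BM : Subgroup G) (n k : ℕ)
    (hA : Nat.card A = n * k)
    (hG : Nat.card G = n ^ 3 * k)
    (hBMcard : Nat.card BM = n ^ 2 * k) :
    A.index = n ^ 2 ∧ BM.index = n ∧ A.index + BM.index + 1 = n ^ 2 + n + 1 := by
  have hAi : A.index = n ^ 2 := A.index_eq_of_card_eq_of_card_eq_mul hA (by rw [hG]; ring)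
  have hBMi : BM.index = n := BM.index_eq_of_card_eq_of_card_eq_mul hBMcard (by rw [hG]; ring)
  exact ⟨hAi, hBMi, by rw [hAi, hBMi]⟩

/-- Under conditions (1)–(4), `A` has `n²` cosets and `BM` has `n` cosets, so the
total point count (adding `∞`) is `n² + n + 1`. -/
theorem stmt15 {G : Type*} [Group G] [Finite G]
    (A B M AM BM : Subgroup G) (n k : ℕ) (hn : 1 < n)
    (hk : k = Nat.card (A ⊓ B : Subgroup G))
    (hA : Nat.card A = n * k) (hB : Nat.card B = n * k) (hM : Nat.card M = n * k)
    (hG : Nat.card G = n ^ 3 * k)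
    (hAM : (AM : Set G) = (A : Set G) * (M : Set G))
    (hBM : (BM : Set G) = (B : Set G) * (M : Set G))
    (hAMcard : Nat.card AM = n ^ 2 * k) (hBMcard : Nat.card BM = n ^ 2 * k)
    (h3 : ∀ g : G, ∃ a ∈ A, ∃ m ∈ M, ∃ b ∈ B, g = a * m * b)
    (h4 : ((A : Set G) * (B : Set G)) ∩ ((B : Set G) * (A : Set G)) =
      (A : Set G) ∪ (B : Set G)) :
    A.index = n ^ 2 ∧ BM.index = n ∧ A.index + BM.index + 1 = n ^ 2 + n + 1 :=
  stmt15_general A BM n k hA hG hBMcard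
end

section
/- In the Heisenberg group G of 3×3 upper unitriangular matrices over a finite field F of order n, the subgroups A (matrices with only the (1,2) entry nonzero), B (matrices with only the (2,3) entry nonzero), and M = Z(G) (matrices with only the (1,3) entry nonzero) satisfy: |A| = |B| = |M| = n, |G| = n³, AM and BM are subgroups of order n², G = AMB, and AB ∩ BA = A ∪ B. -/
open scoped Pointwise

/-!
Writing `toGL (a, b, c)` for the unitriangular matrix with entries `a, b, c` at `(1,2), (2,3),
(1,3)`, the product is `toGL p * toGL q = toGL (p + q + (0, 0, p.1 * q.2.1))`. Hence for additive
subgroups `s₁ s₂ s₃` with `s₁ s₂ ⊆ s₃` the matrices with coordinates in `s₁ × s₂ × s₃` form a group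
in bijection with `s₁ × s₂ × s₃`; taking each `sᵢ` to be `⊥` or `⊤` gives `A, B, M, AM, BM, H` and
their orders. Two such matrices commute iff `p.1 * q.2.1 = q.1 * p.2.1`, so the centre is `M`.
Finally `AB` consists of the matrices with `c = ab` and `BA` of those with `c = 0`, so on
`AB ∩ BA` we get `ab = 0`.
-/

namespace Heisenberg

variable {R : Type*} [Ring R]

def toMatrix (p : R × R × R) : Matrix (Fin 3) (Fin 3) R :=
  !![1, p.1, p.2.2; 0, 1, p.2.1; 0, 0, 1]

theorem toMatrix_mul (p q : R × R × R) :
    toMatrix p * toMatrix q = toMatrix (p + q + (0, 0, p.1 * q.2.1)) := by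
  ext i j
  fin_cases i <;> fin_cases j <;> simp [toMatrix, Matrix.mul_apply, Fin.sum_univ_three] <;> abel

theorem toMatrix_zero : toMatrix (0 : R × R × R) = 1 := by
  ext i j
  fin_cases i <;> fin_cases j <;> simp [toMatrix]

theorem toMatrix_mul_neg (p : R × R × R) :
    toMatrix p * toMatrix (-p + (0, 0, p.1 * p.2.1)) = 1 := by
  rw [toMatrix_mul, ← toMatrix_zero]
  congr 1
  ext <;> simp

theorem toMatrix_neg_mul (p : R × R × R) :
    toMatrix (-p + (0, 0, p.1 * p.2.1)) * toMatrix p = 1 := by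
  rw [toMatrix_mul, ← toMatrix_zero]
  congr 1
  ext <;> simp

def toGL (p : R × R × R) : GL (Fin 3) R :=
  ⟨toMatrix p, toMatrix (-p + (0, 0, p.1 * p.2.1)), toMatrix_mul_neg p, toMatrix_neg_mul p⟩

@[simp]
theorem coe_toGL (p : R × R × R) :
    (toGL p : Matrix (Fin 3) (Fin 3) R) = !![1, p.1, p.2.2; 0, 1, p.2.1; 0, 0, 1] :=
  rfl

theorem toGL_mul (p q : R × R × R) : toGL p * toGL q = toGL (p + q + (0, 0, p.1 * q.2.1)) :=
  Units.ext (toMatrix_mul p q)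

theorem toGL_zero : toGL (0 : R × R × R) = 1 :=
  Units.ext toMatrix_zero

theorem toGL_inv (p : R × R × R) : (toGL p)⁻¹ = toGL (-p + (0, 0, p.1 * p.2.1)) :=
  Units.ext rfl

theorem toGL_injective : Function.Injective (toGL : R × R × R → GL (Fin 3) R) := by
  intro p q h
  have h' := congrArg (fun g : GL (Fin 3) R => ((g : Matrix (Fin 3) (Fin 3) R) 0 1,
    (g : Matrix (Fin 3) (Fin 3) R) 1 2, (g : Matrix (Fin 3) (Fin 3) R) 0 2)) h
  simpa using h'

theorem commute_toGL_iff {p q : R × R × R} :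
    Commute (toGL p) (toGL q) ↔ p.1 * q.2.1 = q.1 * p.2.1 := by
  rw [Commute, SemiconjBy, toGL_mul, toGL_mul, toGL_injective.eq_iff, add_comm p q]
  simp

theorem range_toGL :
    Set.range (toGL : R × R × R → GL (Fin 3) R) =
      {g : GL (Fin 3) R | (g : Matrix (Fin 3) (Fin 3) R) 0 0 = 1 ∧
        (g : Matrix (Fin 3) (Fin 3) R) 1 1 = 1 ∧ (g : Matrix (Fin 3) (Fin 3) R) 2 2 = 1 ∧
        (g : Matrix (Fin 3) (Fin 3) R) 1 0 = 0 ∧ (g : Matrix (Fin 3) (Fin 3) R) 2 0 = 0 ∧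
        (g : Matrix (Fin 3) (Fin 3) R) 2 1 = 0} := by
  ext g
  constructor
  · rintro ⟨p, rfl⟩
    simp
  · rintro ⟨h00, h11, h22, h10, h20, h21⟩
    refine ⟨((g : Matrix (Fin 3) (Fin 3) R) 0 1, (g : Matrix (Fin 3) (Fin 3) R) 1 2,
      (g : Matrix (Fin 3) (Fin 3) R) 0 2), Units.ext ?_⟩
    ext i j
    fin_cases i <;> fin_cases j <;> simp [*]

def subgroup (s₁ s₂ s₃ : AddSubgroup R) (h : ∀ a ∈ s₁, ∀ b ∈ s₂, a * b ∈ s₃) :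
    Subgroup (GL (Fin 3) R) where
  carrier := toGL '' (s₁.prod (s₂.prod s₃))
  one_mem' := ⟨0, zero_mem _, toGL_zero⟩
  mul_mem' := by
    rintro _ _ ⟨p, hp, rfl⟩ ⟨q, hq, rfl⟩
    have hpq : ((0, 0, p.1 * q.2.1) : R × R × R) ∈ s₁.prod (s₂.prod s₃) :=
      ⟨zero_mem _, zero_mem _, h _ hp.1 _ hq.2.1⟩
    exact ⟨_, add_mem (add_mem hp hq) hpq, (toGL_mul p q).symm⟩
  inv_mem' := by
    rintro _ ⟨p, hp, rfl⟩
    have hpp : ((0, 0, p.1 * p.2.1) : R × R × R) ∈ s₁.prod (s₂.prod s₃) :=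
      ⟨zero_mem _, zero_mem _, h _ hp.1 _ hp.2.1⟩
    exact ⟨_, add_mem (neg_mem hp) hpp, (toGL_inv p).symm⟩

section subgroup

variable {s₁ s₂ s₃ : AddSubgroup R} {h : ∀ a ∈ s₁, ∀ b ∈ s₂, a * b ∈ s₃}

theorem mem_subgroup {g : GL (Fin 3) R} :
    g ∈ subgroup s₁ s₂ s₃ h ↔
      ∃ p : R × R × R, (p.1 ∈ s₁ ∧ p.2.1 ∈ s₂ ∧ p.2.2 ∈ s₃) ∧ toGL p = g :=
  Iff.rfl

@[simp]
theorem toGL_mem_subgroup {p : R × R × R} :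
    toGL p ∈ subgroup s₁ s₂ s₃ h ↔ p.1 ∈ s₁ ∧ p.2.1 ∈ s₂ ∧ p.2.2 ∈ s₃ :=
  toGL_injective.mem_set_image

theorem card_subgroup :
    Nat.card (subgroup s₁ s₂ s₃ h) = Nat.card s₁ * (Nat.card s₂ * Nat.card s₃) := by
  rw [← SetLike.coe_sort_coe]
  refine (Nat.card_image_of_injective toGL_injective _).trans ?_
  rw [SetLike.coe_sort_coe, Nat.card_congr (AddSubgroup.prodEquiv _ _).toEquiv, Nat.card_prod,
    Nat.card_congr (AddSubgroup.prodEquiv _ _).toEquiv, Nat.card_prod]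

end subgroup

variable (R)

def H : Subgroup (GL (Fin 3) R) := subgroup ⊤ ⊤ ⊤ fun _ _ _ _ => AddSubgroup.mem_top _
def A : Subgroup (GL (Fin 3) R) := subgroup ⊤ ⊥ ⊥ fun _ _ _ _ => by simp_all
def B : Subgroup (GL (Fin 3) R) := subgroup ⊥ ⊤ ⊥ fun _ _ _ _ => by simp_all
def M : Subgroup (GL (Fin 3) R) := subgroup ⊥ ⊥ ⊤ fun _ _ _ _ => AddSubgroup.mem_top _
def AM : Subgroup (GL (Fin 3) R) := subgroup ⊤ ⊥ ⊤ fun _ _ _ _ => AddSubgroup.mem_top _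
def BM : Subgroup (GL (Fin 3) R) := subgroup ⊥ ⊤ ⊤ fun _ _ _ _ => AddSubgroup.mem_top _

theorem coe_H :
    (H R : Set (GL (Fin 3) R)) =
      {g : GL (Fin 3) R | (g : Matrix (Fin 3) (Fin 3) R) 0 0 = 1 ∧
        (g : Matrix (Fin 3) (Fin 3) R) 1 1 = 1 ∧ (g : Matrix (Fin 3) (Fin 3) R) 2 2 = 1 ∧
        (g : Matrix (Fin 3) (Fin 3) R) 1 0 = 0 ∧ (g : Matrix (Fin 3) (Fin 3) R) 2 0 = 0 ∧
        (g : Matrix (Fin 3) (Fin 3) R) 2 1 = 0} := by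
  rw [← range_toGL]
  ext g
  simp [H, mem_subgroup]

theorem coe_A :
    (A R : Set (GL (Fin 3) R)) =
      {g : GL (Fin 3) R | g ∈ H R ∧ (g : Matrix (Fin 3) (Fin 3) R) 0 2 = 0 ∧
        (g : Matrix (Fin 3) (Fin 3) R) 1 2 = 0} := by
  ext g
  constructor
  · rintro ⟨p, hp, rfl⟩
    simp_all [H, AddSubgroup.mem_prod]
  · rintro ⟨⟨p, -, rfl⟩, hp⟩
    simp_all [A]

theorem coe_B :
    (B R : Set (GL (Fin 3) R)) =
      {g : GL (Fin 3) R | g ∈ H R ∧ (g : Matrix (Fin 3) (Fin 3) R) 0 1 = 0 ∧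
        (g : Matrix (Fin 3) (Fin 3) R) 0 2 = 0} := by
  ext g
  constructor
  · rintro ⟨p, hp, rfl⟩
    simp_all [H, AddSubgroup.mem_prod]
  · rintro ⟨⟨p, -, rfl⟩, hp⟩
    simp_all [B]

theorem coe_M :
    (M R : Set (GL (Fin 3) R)) =
      {g : GL (Fin 3) R | g ∈ H R ∧ (g : Matrix (Fin 3) (Fin 3) R) 0 1 = 0 ∧
        (g : Matrix (Fin 3) (Fin 3) R) 1 2 = 0} := by
  ext g
  constructor
  · rintro ⟨p, hp, rfl⟩
    simp_all [H, AddSubgroup.mem_prod]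
  · rintro ⟨⟨p, -, rfl⟩, hp⟩
    simp_all [M]

theorem M_eq_map_center : M R = (Subgroup.center (H R)).map (H R).subtype := by
  ext g
  constructor
  · rintro ⟨p, hp, rfl⟩
    refine ⟨⟨toGL p, by simp [H]⟩, Subgroup.mem_center_iff.2 ?_, rfl⟩
    rintro ⟨_, q, -, rfl⟩
    exact Subtype.ext (commute_toGL_iff.2 (by simp_all [AddSubgroup.mem_prod])).eq
  · rintro ⟨⟨_, hx⟩, hcenter, rfl⟩
    obtain ⟨p, -, rfl⟩ := mem_subgroup.1 hx
    have key (q : R × R × R) : q.1 * p.2.1 = p.1 * q.2.1 := commute_toGL_iff.1 <|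
      congrArg Subtype.val (Subgroup.mem_center_iff.1 hcenter ⟨toGL q, by simp [H]⟩)
    have h₁ := key (1, 0, 0)
    have h₂ := key (0, 1, 0)
    simp_all [M]

theorem card_H : Nat.card (H R) = Nat.card R ^ 3 := by
  simp [H, card_subgroup, pow_three]

theorem card_A : Nat.card (A R) = Nat.card R := by
  simp [A, card_subgroup]

theorem card_B : Nat.card (B R) = Nat.card R := by
  simp [B, card_subgroup]

theorem card_M : Nat.card (M R) = Nat.card R := by
  simp [M, card_subgroup]

theorem card_AM : Nat.card (AM R) = Nat.card R ^ 2 := by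
  simp [AM, card_subgroup, sq]

theorem card_BM : Nat.card (BM R) = Nat.card R ^ 2 := by
  simp [BM, card_subgroup, sq]

theorem coe_AM : (AM R : Set (GL (Fin 3) R)) = A R * M R := by
  ext g
  constructor
  · rintro ⟨⟨a, b, c⟩, hp, rfl⟩
    refine ⟨toGL (a, 0, 0), by simp [A], toGL (0, 0, c), by simp [M], ?_⟩
    simp_all [toGL_mul, AddSubgroup.mem_prod]
  · rintro ⟨_, ⟨p, hp, rfl⟩, _, ⟨q, hq, rfl⟩, rfl⟩
    simp_all [toGL_mul, AM, AddSubgroup.mem_prod]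

theorem coe_BM : (BM R : Set (GL (Fin 3) R)) = B R * M R := by
  ext g
  constructor
  · rintro ⟨⟨a, b, c⟩, hp, rfl⟩
    refine ⟨toGL (0, b, 0), by simp [B], toGL (0, 0, c), by simp [M], ?_⟩
    simp_all [toGL_mul, AddSubgroup.mem_prod]
  · rintro ⟨_, ⟨p, hp, rfl⟩, _, ⟨q, hq, rfl⟩, rfl⟩
    simp_all [toGL_mul, BM, AddSubgroup.mem_prod]

theorem exists_mul_mul_of_mem_H {g : GL (Fin 3) R} (hg : g ∈ H R) :
    ∃ a ∈ A R, ∃ m ∈ M R, ∃ b ∈ B R, g = a * m * b := by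
  obtain ⟨⟨a, b, c⟩, -, rfl⟩ := hg
  refine ⟨toGL (a, 0, 0), by simp [A], toGL (0, 0, c - a * b), by simp [M], toGL (0, b, 0),
    by simp [B], ?_⟩
  simp [toGL_mul]

theorem coe_A_mul_B :
    (A R : Set (GL (Fin 3) R)) * B R = {g | ∃ a b : R, toGL (a, b, a * b) = g} := by
  ext g
  constructor
  · rintro ⟨_, ⟨⟨a, a₂, a₃⟩, ha, rfl⟩, _, ⟨⟨b₁, b, b₃⟩, hb, rfl⟩, rfl⟩
    exact ⟨a, b, by simp_all [toGL_mul, AddSubgroup.mem_prod]⟩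
  · rintro ⟨a, b, rfl⟩
    exact ⟨toGL (a, 0, 0), by simp [A], toGL (0, b, 0), by simp [B], by simp [toGL_mul]⟩

theorem coe_B_mul_A :
    (B R : Set (GL (Fin 3) R)) * A R = {g | ∃ a b : R, toGL (a, b, 0) = g} := by
  ext g
  constructor
  · rintro ⟨_, ⟨⟨b₁, b, b₃⟩, hb, rfl⟩, _, ⟨⟨a, a₂, a₃⟩, ha, rfl⟩, rfl⟩
    exact ⟨a, b, by simp_all [toGL_mul, AddSubgroup.mem_prod]⟩
  · rintro ⟨a, b, rfl⟩
    exact ⟨toGL (0, b, 0), by simp [B], toGL (a, 0, 0), by simp [A], by simp [toGL_mul]⟩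

theorem A_mul_B_inter_B_mul_A [NoZeroDivisors R] :
    ((A R : Set (GL (Fin 3) R)) * B R) ∩ (B R * A R) = (A R : Set (GL (Fin 3) R)) ∪ B R := by
  refine subset_antisymm ?_ (Set.union_subset ?_ ?_)
  · rw [coe_A_mul_B, coe_B_mul_A]
    rintro _ ⟨⟨a, b, rfl⟩, a', b', h⟩
    simp only [toGL_injective.eq_iff, Prod.mk.injEq] at h
    rcases mul_eq_zero.1 h.2.2.symm with rfl | rfl
    · exact Or.inr (by simp [B])
    · exact Or.inl (by simp [A])
  · exact fun g hg => ⟨Set.mem_mul.2 ⟨g, hg, 1, one_mem _, mul_one g⟩,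
      Set.mem_mul.2 ⟨1, one_mem _, g, hg, one_mul g⟩⟩
  · exact fun g hg => ⟨Set.mem_mul.2 ⟨1, one_mem _, g, hg, one_mul g⟩,
      Set.mem_mul.2 ⟨g, hg, 1, one_mem _, mul_one g⟩⟩

end Heisenberg

open Heisenberg in
theorem stmt16_general (F : Type*) [Field F] [Fintype F] (n : ℕ)
    (hF : Fintype.card F = n) :
    ∃ H A B M AM BM : Subgroup (GL (Fin 3) F),
      (H : Set (GL (Fin 3) F)) =
        {g : GL (Fin 3) F | (g : Matrix (Fin 3) (Fin 3) F) 0 0 = 1 ∧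
          (g : Matrix (Fin 3) (Fin 3) F) 1 1 = 1 ∧
          (g : Matrix (Fin 3) (Fin 3) F) 2 2 = 1 ∧
          (g : Matrix (Fin 3) (Fin 3) F) 1 0 = 0 ∧
          (g : Matrix (Fin 3) (Fin 3) F) 2 0 = 0 ∧
          (g : Matrix (Fin 3) (Fin 3) F) 2 1 = 0} ∧
      (A : Set (GL (Fin 3) F)) =
        {g : GL (Fin 3) F | g ∈ H ∧ (g : Matrix (Fin 3) (Fin 3) F) 0 2 = 0 ∧
          (g : Matrix (Fin 3) (Fin 3) F) 1 2 = 0} ∧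
      (B : Set (GL (Fin 3) F)) =
        {g : GL (Fin 3) F | g ∈ H ∧ (g : Matrix (Fin 3) (Fin 3) F) 0 1 = 0 ∧
          (g : Matrix (Fin 3) (Fin 3) F) 0 2 = 0} ∧
      (M : Set (GL (Fin 3) F)) =
        {g : GL (Fin 3) F | g ∈ H ∧ (g : Matrix (Fin 3) (Fin 3) F) 0 1 = 0 ∧
          (g : Matrix (Fin 3) (Fin 3) F) 1 2 = 0} ∧
      M = (Subgroup.center (↥H)).map H.subtype ∧
      Nat.card A = n ∧ Nat.card B = n ∧ Nat.card M = n ∧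
      Nat.card H = n ^ 3 ∧
      (AM : Set (GL (Fin 3) F)) =
        (A : Set (GL (Fin 3) F)) * (M : Set (GL (Fin 3) F)) ∧
      (BM : Set (GL (Fin 3) F)) =
        (B : Set (GL (Fin 3) F)) * (M : Set (GL (Fin 3) F)) ∧
      Nat.card AM = n ^ 2 ∧ Nat.card BM = n ^ 2 ∧
      (∀ g ∈ H, ∃ a ∈ A, ∃ m ∈ M, ∃ b ∈ B, g = a * m * b) ∧
      ((A : Set (GL (Fin 3) F)) * (B : Set (GL (Fin 3) F))) ∩
          ((B : Set (GL (Fin 3) F)) * (A : Set (GL (Fin 3) F))) =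
        (A : Set (GL (Fin 3) F)) ∪ (B : Set (GL (Fin 3) F)) := by
  rw [← hF, ← Nat.card_eq_fintype_card]
  exact ⟨H F, A F, B F, M F, AM F, BM F, coe_H F, coe_A F, coe_B F, coe_M F, M_eq_map_center F,
    card_A F, card_B F, card_M F, card_H F, coe_AM F, coe_BM F, card_AM F, card_BM F,
    fun _ => exists_mul_mul_of_mem_H F, A_mul_B_inter_B_mul_A F⟩

/-- In the Heisenberg group `H` of `3 × 3` upper unitriangular matrices over a finite
field `F` of order `n`, the one-parameter subgroups `A` (only the `(1,2)` entry
nonzero), `B` (only the `(2,3)` entry), and `M = Z(H)` (only the `(1,3)` entry)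
satisfy `|A| = |B| = |M| = n`, `|H| = n³`, `AM` and `BM` are subgroups of order `n²`,
`H = AMB`, and `AB ∩ BA = A ∪ B`. -/
theorem stmt16 (F : Type*) [Field F] [Fintype F] (n : ℕ) (hn : 1 < n)
    (hF : Fintype.card F = n) :
    ∃ H A B M AM BM : Subgroup (GL (Fin 3) F),
      (H : Set (GL (Fin 3) F)) =
        {g : GL (Fin 3) F | (g : Matrix (Fin 3) (Fin 3) F) 0 0 = 1 ∧
          (g : Matrix (Fin 3) (Fin 3) F) 1 1 = 1 ∧
          (g : Matrix (Fin 3) (Fin 3) F) 2 2 = 1 ∧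
          (g : Matrix (Fin 3) (Fin 3) F) 1 0 = 0 ∧
          (g : Matrix (Fin 3) (Fin 3) F) 2 0 = 0 ∧
          (g : Matrix (Fin 3) (Fin 3) F) 2 1 = 0} ∧
      (A : Set (GL (Fin 3) F)) =
        {g : GL (Fin 3) F | g ∈ H ∧ (g : Matrix (Fin 3) (Fin 3) F) 0 2 = 0 ∧
          (g : Matrix (Fin 3) (Fin 3) F) 1 2 = 0} ∧
      (B : Set (GL (Fin 3) F)) =
        {g : GL (Fin 3) F | g ∈ H ∧ (g : Matrix (Fin 3) (Fin 3) F) 0 1 = 0 ∧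
          (g : Matrix (Fin 3) (Fin 3) F) 0 2 = 0} ∧
      (M : Set (GL (Fin 3) F)) =
        {g : GL (Fin 3) F | g ∈ H ∧ (g : Matrix (Fin 3) (Fin 3) F) 0 1 = 0 ∧
          (g : Matrix (Fin 3) (Fin 3) F) 1 2 = 0} ∧
      M = (Subgroup.center (↥H)).map H.subtype ∧
      Nat.card A = n ∧ Nat.card B = n ∧ Nat.card M = n ∧
      Nat.card H = n ^ 3 ∧
      (AM : Set (GL (Fin 3) F)) =
        (A : Set (GL (Fin 3) F)) * (M : Set (GL (Fin 3) F)) ∧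
      (BM : Set (GL (Fin 3) F)) =
        (B : Set (GL (Fin 3) F)) * (M : Set (GL (Fin 3) F)) ∧
      Nat.card AM = n ^ 2 ∧ Nat.card BM = n ^ 2 ∧
      (∀ g ∈ H, ∃ a ∈ A, ∃ m ∈ M, ∃ b ∈ B, g = a * m * b) ∧
      ((A : Set (GL (Fin 3) F)) * (B : Set (GL (Fin 3) F))) ∩
          ((B : Set (GL (Fin 3) F)) * (A : Set (GL (Fin 3) F))) =
        (A : Set (GL (Fin 3) F)) ∪ (B : Set (GL (Fin 3) F)) :=
  stmt16_general F n hF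
end

section
/- Let G be a finite group with subgroups A, B, M satisfying conditions (1)–(4) with M normal in G, and suppose n is even and all involutions of B are elations of the associated plane whose fixed points all lie on the line at infinity. Then |G| = n³ is a power of 2. -/
/-!
Points of the plane are the cosets `g A`, lines the translates `g AM` and `g B A`; elements of `M`
and involutions of `B` act as translations with different centres. Counting gives
`G = AM ∪ A B A = BM ∪ B A B`: every point lies on the vertical line or on a line `c B A` through
the point `A`. Hence an element `u ∉ AM` all of whose conjugates lie in `BM` is conjugated into
`B` by some `c ∈ A`. Applied to `m⁻¹ τ m` (`τ ∈ B` an involution, `m ∈ M`) this gives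
`τ m = m τ`: for `c ≠ 1` the lines `B A` and `m c B A` are both fixed by `τ` and meet in a point
`z`, so `z⁻¹ τ z ∈ B`, and (4) forces `z ∈ B`, i.e. `c = 1`. If `m ∈ M` had odd order, `τ` would
be a power of `u = m τ`; conjugating `u` into `B` puts `τ` in `c B c⁻¹`, so `c = 1` by (4),
`u ∈ B` and `m = 1`. Thus `M` is a `2`-group and `|G| = |M|³` is a power of `2`.
-/

open scoped Pointwise

section GroupLemmas

variable {G : Type*} [Group G]

theorem Subgroup.left_le_of_coe_eq_mul_s19 {H N K : Subgroup G} (h : (K : Set G) = H * N) : H ≤ K :=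
  fun x hx => by rw [← SetLike.mem_coe, h]; exact ⟨x, hx, 1, N.one_mem, mul_one x⟩

theorem Subgroup.right_le_of_coe_eq_mul_s19 {H N K : Subgroup G} (h : (K : Set G) = H * N) : N ≤ K :=
  fun x hx => by rw [← SetLike.mem_coe, h]; exact ⟨1, H.one_mem, x, hx, one_mul x⟩

theorem Subgroup.disjoint_of_card_mul_eq [Finite G] {H K : Subgroup G}
    (hcard : Nat.card H * Nat.card K = Nat.card G) (hmul : ∀ g : G, g ∈ (H : Set G) * K) :
    Disjoint H K := by
  refine IsComplement'.disjoint (Function.Surjective.bijective_of_nat_card_le (fun g => ?_) ?_)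
  · obtain ⟨h, hh, k, hk, rfl⟩ := hmul g
    exact ⟨(⟨h, hh⟩, ⟨k, hk⟩), rfl⟩
  · exact ((Nat.card_prod _ _).trans hcard).le

variable {X Y : Subgroup G}

theorem Subgroup.eq_one_of_mul_mul_mem (hXY : Disjoint X Y)
    (h : ((X : Set G) * (Y : Set G)) ∩ ((Y : Set G) * (X : Set G)) = (X : Set G) ∪ (Y : Set G)) {x y x' : G} (hx : x ∈ X) (hy : y ∈ Y)
    (hx' : x' ∈ X) (hy1 : y ≠ 1) (hxyx : x * y * x' ∈ Y) : x = 1 ∧ x' = 1 := by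
  have hxy : x * y ∈ (X : Set G) ∪ (Y : Set G) := by
    rw [← h]
    refine ⟨Set.mul_mem_mul hx hy, ?_⟩
    simpa using Set.mul_mem_mul hxyx (X.inv_mem hx')
  rcases hxy with hxyX | hxyY
  · refine absurd (Subgroup.disjoint_def.mp hXY ?_ hy) hy1
    simpa using X.mul_mem (X.inv_mem hx) hxyX
  · obtain rfl : x = 1 := Subgroup.disjoint_def.mp hXY hx (by simpa using Y.mul_mem hxyY (Y.inv_mem hy))
    refine ⟨rfl, Subgroup.disjoint_def.mp hXY hx' ?_⟩
    simpa using Y.mul_mem (Y.inv_mem hy) hxyx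

theorem Subgroup.mem_or_mem_mul_mul [Finite G] {H : Subgroup G} {n : ℕ} (hXY : Disjoint X Y)
    (h : ((X : Set G) * (Y : Set G)) ∩ ((Y : Set G) * (X : Set G)) = (X : Set G) ∪ (Y : Set G)) (hXH : X ≤ H) (hYH : Disjoint Y H)
    (hX : Nat.card X = n) (hY : Nat.card Y = n) (hH : Nat.card H = n ^ 2)
    (hG : Nat.card G = n ^ 3) (g : G) : g ∈ H ∨ g ∈ (X : Set G) * Y * X := by
  let f : H ⊕ (X × {y : Y // y ≠ 1} × X) → G :=
    Sum.elim (↑) fun p => p.1 * p.2.1 * p.2.2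
  have hH_ne : ∀ (k : H) (p : X × {y : Y // y ≠ 1} × X), f (.inl k) ≠ f (.inr p) := by
    rintro k ⟨x, ⟨y, hy1⟩, x'⟩ hk
    refine hy1 (Subtype.ext (Subgroup.disjoint_def.mp hYH y.2 ?_))
    have : (y : G) = (x : G)⁻¹ * k * (x' : G)⁻¹ := by
      simp only [f, Sum.elim_inl, Sum.elim_inr] at hk
      rw [hk]; group
    rw [this]
    exact H.mul_mem (H.mul_mem (H.inv_mem (hXH x.2)) k.2) (H.inv_mem (hXH x'.2))
  have hf : Function.Injective f := by
    rintro (k₁ | ⟨x₁, ⟨y₁, hy₁⟩, x₁'⟩) (k₂ | ⟨x₂, ⟨y₂, hy₂⟩, x₂'⟩) heq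
    · exact congrArg _ (Subtype.ext heq)
    · exact absurd heq (hH_ne _ _)
    · exact absurd heq.symm (hH_ne _ _)
    · simp only [f, Sum.elim_inr] at heq
      have hy₁' : (y₁ : G) ≠ 1 := fun h => hy₁ (Subtype.ext h)
      have hmem : ((x₂ : G)⁻¹ * x₁) * y₁ * ((x₁' : G) * (x₂' : G)⁻¹) ∈ Y := by
        have : ((x₂ : G)⁻¹ * x₁) * y₁ * ((x₁' : G) * (x₂' : G)⁻¹) = y₂ := by
          rw [show ((x₂ : G)⁻¹ * x₁) * y₁ * ((x₁' : G) * (x₂' : G)⁻¹)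
            = (x₂ : G)⁻¹ * (x₁ * y₁ * x₁') * (x₂' : G)⁻¹ by group, heq]
          group
        exact this ▸ y₂.2
      obtain ⟨hx, hx'⟩ := Subgroup.eq_one_of_mul_mul_mem hXY h
        (X.mul_mem (X.inv_mem x₂.2) x₁.2) y₁.2 (X.mul_mem x₁'.2 (X.inv_mem x₂'.2)) hy₁' hmem
      obtain rfl : x₁ = x₂ := Subtype.ext (inv_mul_eq_one.mp hx).symm
      obtain rfl : x₁' = x₂' := Subtype.ext (mul_inv_eq_one.mp hx')
      obtain rfl : y₁ = y₂ := Subtype.ext (by simpa using heq)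
      rfl
  have hcard : Nat.card G ≤ Nat.card (H ⊕ (X × {y : Y // y ≠ 1} × X)) := by
    classical
    have hk : Nat.card {y : Y // y ≠ 1} + 1 = n := by
      rw [← Finite.card_option, Nat.card_congr (Equiv.optionSubtypeNe 1), hY]
    rw [Nat.card_sum, Nat.card_prod, Nat.card_prod, hH, hX, hG, ← hk]
    exact le_of_eq (by ring)
  obtain ⟨k | ⟨x, ⟨y, -⟩, x'⟩, rfl⟩ := (hf.bijective_of_nat_card_le hcard).surjective g
  · exact Or.inl k.2
  · exact Or.inr (Set.mul_mem_mul (Set.mul_mem_mul x.2 y.2) x'.2)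

end GroupLemmas

structure SoftPlane {G : Type*} [Group G] (A B M AM BM : Subgroup G) (n : ℕ) : Prop where
  inf_eq_bot : A ⊓ B = ⊥
  card_A : Nat.card A = n
  card_B : Nat.card B = n
  card_G : Nat.card G = n ^ 3
  coe_AM : (AM : Set G) = (A : Set G) * (M : Set G)
  coe_BM : (BM : Set G) = (B : Set G) * (M : Set G)
  card_AM : Nat.card AM = n ^ 2
  card_BM : Nat.card BM = n ^ 2
  exists_eq_mul_mul : ∀ g : G, ∃ a ∈ A, ∃ m ∈ M, ∃ b ∈ B, g = a * m * b
  mul_inter_mul : ((A : Set G) * (B : Set G)) ∩ ((B : Set G) * (A : Set G)) =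
    (A : Set G) ∪ (B : Set G)
  normal : M.Normal

namespace SoftPlane

variable {G : Type*} [Group G] {A B M AM BM : Subgroup G} {n : ℕ}

theorem disjoint_A_B (P : SoftPlane A B M AM BM n) : Disjoint A B :=
  disjoint_iff.mpr P.inf_eq_bot

theorem mul_inter_mul_symm (P : SoftPlane A B M AM BM n) :
    ((B : Set G) * (A : Set G)) ∩ ((A : Set G) * (B : Set G)) = (B : Set G) ∪ (A : Set G) := by
  rw [Set.inter_comm, Set.union_comm, P.mul_inter_mul]

theorem A_le_AM (P : SoftPlane A B M AM BM n) : A ≤ AM := Subgroup.left_le_of_coe_eq_mul_s19 P.coe_AM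

theorem M_le_AM (P : SoftPlane A B M AM BM n) : M ≤ AM := Subgroup.right_le_of_coe_eq_mul_s19 P.coe_AM

theorem M_le_BM (P : SoftPlane A B M AM BM n) : M ≤ BM := Subgroup.right_le_of_coe_eq_mul_s19 P.coe_BM

theorem B_le_BM (P : SoftPlane A B M AM BM n) : B ≤ BM := Subgroup.left_le_of_coe_eq_mul_s19 P.coe_BM

variable [Finite G]

theorem disjoint_A_BM (P : SoftPlane A B M AM BM n) : Disjoint A BM := by
  refine Subgroup.disjoint_of_card_mul_eq (by rw [P.card_A, P.card_BM, P.card_G]; ring) fun g => ?_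
  obtain ⟨a, ha, m, hm, b, hb, rfl⟩ := P.exists_eq_mul_mul g
  exact ⟨a, ha, m * b, BM.mul_mem (P.M_le_BM hm) (P.B_le_BM hb), (mul_assoc _ _ _).symm⟩

theorem disjoint_B_AM (P : SoftPlane A B M AM BM n) : Disjoint B AM := by
  refine Subgroup.disjoint_of_card_mul_eq (by rw [P.card_B, P.card_AM, P.card_G]; ring) fun g => ?_
  obtain ⟨a, ha, m, hm, b, hb, hg⟩ := P.exists_eq_mul_mul g⁻¹
  refine ⟨b⁻¹, B.inv_mem hb, m⁻¹ * a⁻¹,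
    AM.mul_mem (P.M_le_AM (M.inv_mem hm)) (P.A_le_AM (A.inv_mem ha)), ?_⟩
  rw [← inv_inv g, hg]; group

theorem disjoint_B_M (P : SoftPlane A B M AM BM n) : Disjoint B M :=
  P.disjoint_B_AM.mono_right P.M_le_AM

theorem mem_AM_or_mem_mul_mul (P : SoftPlane A B M AM BM n) (g : G) :
    g ∈ AM ∨ g ∈ (A : Set G) * (B : Set G) * (A : Set G) :=
  Subgroup.mem_or_mem_mul_mul P.disjoint_A_B P.mul_inter_mul
    P.A_le_AM P.disjoint_B_AM P.card_A P.card_B P.card_AM P.card_G g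

theorem mem_BM_or_mem_mul_mul (P : SoftPlane A B M AM BM n) (g : G) :
    g ∈ BM ∨ g ∈ (B : Set G) * (A : Set G) * (B : Set G) :=
  Subgroup.mem_or_mem_mul_mul P.disjoint_A_B.symm P.mul_inter_mul_symm P.B_le_BM P.disjoint_A_BM
    P.card_B P.card_A P.card_BM P.card_G g

theorem exists_conj_mem_B (P : SoftPlane A B M AM BM n) {u : G} (hu : u ∉ AM)
    (hconj : ∀ g : G, g * u * g⁻¹ ∈ BM) : ∃ c ∈ A, c⁻¹ * u * c ∈ B := by
  obtain ⟨_, ⟨c, hc, b, hb, rfl⟩, a, ha, rfl⟩ :=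
    (P.mem_AM_or_mem_mul_mul u).resolve_left hu
  have hac : a * c ∈ BM := by
    simpa [mul_assoc] using BM.mul_mem (BM.inv_mem (P.B_le_BM hb)) (hconj c⁻¹)
  have hac1 : a * c = 1 := Subgroup.disjoint_def.mp P.disjoint_A_BM (A.mul_mem ha hc) hac
  refine ⟨c, hc, ?_⟩
  rwa [show c⁻¹ * (c * b * a) * c = b * (a * c) by group, hac1, mul_one]

theorem commute_of_conj_mem_BM (P : SoftPlane A B M AM BM n) {τ m : G} (hτB : τ ∈ B)
    (hτ1 : τ ≠ 1) (hτ : ∀ g : G, g * τ * g⁻¹ ∈ BM) (hm : m ∈ M) : Commute τ m := by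
  set x := m⁻¹ * τ * m with hx
  have hxAM : x ∉ AM := fun h => hτ1 <| Subgroup.disjoint_def.mp P.disjoint_B_AM hτB <| by
    simpa [hx, mul_assoc] using AM.mul_mem (AM.mul_mem (P.M_le_AM hm) h) (P.M_le_AM (M.inv_mem hm))
  obtain ⟨c, hcA, hcx⟩ := P.exists_conj_mem_B hxAM fun g => by
    simpa [hx, mul_assoc] using hτ (g * m⁻¹)
  by_cases hc : c = 1
  · subst hc
    have hxB : τ⁻¹ * x ∈ B := B.mul_mem (B.inv_mem hτB) (by simpa using hcx)
    have hxM : τ⁻¹ * x ∈ M := by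
      simpa [hx, mul_assoc] using M.mul_mem (P.normal.conj_mem m⁻¹ (M.inv_mem hm) τ⁻¹) hm
    have hxτ : x = τ := inv_mul_eq_one.mp (Subgroup.disjoint_def.mp P.disjoint_B_M hxB hxM) |>.symm
    calc τ * m = m * x := by rw [hx]; group
      _ = m * τ := by rw [hxτ]
  · have hmc : m * c ∉ BM := fun h => hc <| Subgroup.disjoint_def.mp P.disjoint_A_BM hcA <| by
      simpa using BM.mul_mem (BM.inv_mem (P.M_le_BM hm)) h
    obtain ⟨_, ⟨b₁, hb₁, α, hα, rfl⟩, b₂, hb₂, hmc_eq⟩ :=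
      (P.mem_BM_or_mem_mul_mul (m * c)).resolve_left hmc
    dsimp only at hmc_eq
    -- `b₁ α = m c b₂⁻¹` lies on the lines `B A` and `m c B A`, both fixed by `τ`
    have hb₁_eq : b₁ = m * c * b₂⁻¹ * α⁻¹ := by rw [← hmc_eq]; group
    have hτz : α⁻¹ * (b₁⁻¹ * τ * b₁) * α = b₂ * (c⁻¹ * x * c) * b₂⁻¹ := by
      rw [hx, hb₁_eq]; group
    have hτ₁B : b₁⁻¹ * τ * b₁ ∈ B := B.mul_mem (B.mul_mem (B.inv_mem hb₁) hτB) hb₁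
    have hτ₁1 : b₁⁻¹ * τ * b₁ ≠ 1 := fun h => hτ1 <| by
      rw [show τ = b₁ * (b₁⁻¹ * τ * b₁) * b₁⁻¹ by group, h]; group
    obtain ⟨hα1, -⟩ := Subgroup.eq_one_of_mul_mul_mem P.disjoint_A_B P.mul_inter_mul
      (A.inv_mem hα) hτ₁B hα hτ₁1
      (hτz ▸ B.mul_mem (B.mul_mem hb₂ hcx) (B.inv_mem hb₂))
    obtain rfl : α = 1 := inv_eq_one.mp hα1
    refine absurd (Subgroup.disjoint_def.mp P.disjoint_A_BM hcA ?_) hc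
    rw [show c = m⁻¹ * (b₁ * 1 * b₂) by rw [hmc_eq]; group]
    exact BM.mul_mem (P.M_le_BM (M.inv_mem hm))
      (BM.mul_mem (BM.mul_mem (P.B_le_BM hb₁) BM.one_mem) (P.B_le_BM hb₂))

theorem eq_one_of_odd_orderOf (P : SoftPlane A B M AM BM n) {τ m : G} (hτB : τ ∈ B)
    (hτ2 : τ * τ = 1) (hτ1 : τ ≠ 1) (hτ : ∀ g : G, g * τ * g⁻¹ ∈ BM) (hm : m ∈ M)
    (hodd : Odd (orderOf m)) : m = 1 := by
  set u := m * τ with hu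
  have hu_pow : u ^ orderOf m = τ := by
    obtain ⟨k, hk⟩ := hodd
    rw [hu, (P.commute_of_conj_mem_BM hτB hτ1 hτ hm).symm.mul_pow, pow_orderOf_eq_one, one_mul,
      hk, pow_succ, pow_mul, sq, hτ2, one_pow, one_mul]
  have huAM : u ∉ AM := fun h => hτ1 <| Subgroup.disjoint_def.mp P.disjoint_B_AM hτB <| by
    simpa [hu] using AM.mul_mem (P.M_le_AM (M.inv_mem hm)) h
  obtain ⟨c, hcA, hcu⟩ := P.exists_conj_mem_B huAM fun g => by
    simpa [hu, mul_assoc] using BM.mul_mem (P.M_le_BM (P.normal.conj_mem m hm g)) (hτ g)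
  have hcτ : c⁻¹ * τ * c ∈ B := by
    have := conj_pow (a := c⁻¹) (b := u) (i := orderOf m)
    rw [inv_inv, hu_pow] at this
    exact this ▸ B.pow_mem hcu _
  obtain ⟨hc1, -⟩ := Subgroup.eq_one_of_mul_mul_mem P.disjoint_A_B P.mul_inter_mul
    (A.inv_mem hcA) hτB hcA hτ1 hcτ
  obtain rfl : c = 1 := inv_eq_one.mp hc1
  refine Subgroup.disjoint_def.mp P.disjoint_B_M ?_ hm
  rw [show m = u * τ⁻¹ by rw [hu]; group]
  exact B.mul_mem (by simpa using hcu) (B.inv_mem hτB)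

theorem exists_card_M_eq_two_pow (P : SoftPlane A B M AM BM n) {τ : G} (hτB : τ ∈ B)
    (hτ2 : τ * τ = 1) (hτ1 : τ ≠ 1) (hτ : ∀ g : G, g * τ * g⁻¹ ∈ BM) :
    ∃ j : ℕ, Nat.card M = 2 ^ j := by
  refine ⟨_, Nat.eq_prime_pow_of_unique_prime_dvd Nat.card_pos.ne' fun {q} hq hqM => ?_⟩
  by_contra hq2
  have := Fact.mk hq
  obtain ⟨m, hm⟩ := exists_prime_orderOf_dvd_card' q hqM
  have hm1 : (m : G) = 1 := P.eq_one_of_odd_orderOf hτB hτ2 hτ1 hτ m.2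
    (by rw [Subgroup.orderOf_coe, hm]; exact hq.odd_of_ne_two hq2)
  have : orderOf m = 1 := by rw [← Subgroup.orderOf_coe, hm1, orderOf_one]
  exact hq.one_lt.ne' (hm ▸ this)

end SoftPlane

theorem stmt19_general {G : Type*} [Group G] [Finite G]
    (A B M AM BM : Subgroup G) (n : ℕ)
    (hAB : A ⊓ B = ⊥)
    (hA : Nat.card A = n) (hB : Nat.card B = n) (hM : Nat.card M = n)
    (hG : Nat.card G = n ^ 3)
    (hAM : (AM : Set G) = (A : Set G) * (M : Set G))
    (hBM : (BM : Set G) = (B : Set G) * (M : Set G))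
    (hAMcard : Nat.card AM = n ^ 2) (hBMcard : Nat.card BM = n ^ 2)
    (h3 : ∀ g : G, ∃ a ∈ A, ∃ m ∈ M, ∃ b ∈ B, g = a * m * b)
    (h4 : ((A : Set G) * (B : Set G)) ∩ ((B : Set G) * (A : Set G)) =
      (A : Set G) ∪ (B : Set G))
    (hnorm : M.Normal) (heven : 2 ∣ n)
    (helation : ∀ b ∈ B, b * b = 1 → b ≠ 1 →
      (∀ x : G, x * b * x⁻¹ ∈ BM) ∧ (∀ x : G, x * b * x⁻¹ ∉ A)) :
    Nat.card G = n ^ 3 ∧ ∃ j : ℕ, Nat.card G = 2 ^ j := by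
  have P : SoftPlane A B M AM BM n :=
    ⟨hAB, hA, hB, hG, hAM, hBM, hAMcard, hBMcard, h3, h4, hnorm⟩
  obtain ⟨τ, hτ⟩ := exists_prime_orderOf_dvd_card' (G := B) 2 (hB ▸ heven)
  have hτ2 : (τ : G) * τ = 1 := by rw [← sq, ← hτ, ← Subgroup.orderOf_coe, pow_orderOf_eq_one]
  have hτ1 : (τ : G) ≠ 1 := fun h => by
    rw [← Subgroup.orderOf_coe, h, orderOf_one] at hτ; exact absurd hτ (by norm_num)
  obtain ⟨j, hj⟩ :=
    P.exists_card_M_eq_two_pow τ.2 hτ2 hτ1 (helation τ τ.2 hτ2 hτ1).1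
  exact ⟨hG, 3 * j, by rw [hG, ← hM, hj, ← pow_mul, mul_comm]⟩

/-- Suppose conditions (1)–(4) hold with `M ⊴ G` (so `A ∩ B = 1`, `|M| = n`,
`|G| = n³`), `n` is even, and every involution of `B` is an elation of the associated
plane all of whose fixed points lie on the line at infinity (group-theoretically: it
stabilizes every point-coset `BMx` of the line at infinity and fixes no point-coset
`Ax` off that line).  Then `|G| = n³` is a power of 2. -/
theorem stmt19 {G : Type*} [Group G] [Finite G]
    (A B M AM BM : Subgroup G) (n : ℕ) (hn : 1 < n)
    (hAB : A ⊓ B = ⊥)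
    (hA : Nat.card A = n) (hB : Nat.card B = n) (hM : Nat.card M = n)
    (hG : Nat.card G = n ^ 3)
    (hAM : (AM : Set G) = (A : Set G) * (M : Set G))
    (hBM : (BM : Set G) = (B : Set G) * (M : Set G))
    (hAMcard : Nat.card AM = n ^ 2) (hBMcard : Nat.card BM = n ^ 2)
    (h3 : ∀ g : G, ∃ a ∈ A, ∃ m ∈ M, ∃ b ∈ B, g = a * m * b)
    (h4 : ((A : Set G) * (B : Set G)) ∩ ((B : Set G) * (A : Set G)) =
      (A : Set G) ∪ (B : Set G))
    (hnorm : M.Normal) (heven : 2 ∣ n)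
    (helation : ∀ b ∈ B, b * b = 1 → b ≠ 1 →
      (∀ x : G, x * b * x⁻¹ ∈ BM) ∧ (∀ x : G, x * b * x⁻¹ ∉ A)) :
    Nat.card G = n ^ 3 ∧ ∃ j : ℕ, Nat.card G = 2 ^ j :=
  stmt19_general A B M AM BM n hAB hA hB hM hG hAM hBM hAMcard hBMcard h3 h4 hnorm heven helation
end
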